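/- arXiv:1210.0696 — 11 statements merged into one kernel-verified Lean document; each statement's English description precedes it below -/
import Mathlib

section
/- Let G be a group, A ⊆ G, and let F be a finite subset of G. Then Δ(FA) = FΔ(A)F⁻¹, where FA = {fa : f ∈ F, a ∈ A} and FΔ(A)F⁻¹ = {f g f'⁻¹ : f ∈ F, g ∈ Δ(A), f' ∈ F}. -/
open scoped Pointwise

/-- The combinatorial derivation: `Δ(A) = {g ∈ G : gA ∩ A is infinite}`. -/
def Delta {G : Type*} [Group G] (A : Set G) : Set G :=
  {g : G | ((g • A) ∩ A).Infinite}

theorem delta_finite_mul {G : Type*} [Group G] (A F : Set G) (hF : F.Finite) :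
    Delta (F * A) = F * Delta A * F⁻¹ := by
  ext g
  constructor
  · intro (hg : ((g • (F * A)) ∩ (F * A)).Infinite)
    have hsub : (g • (F * A)) ∩ (F * A) ⊆
        ⋃ f ∈ F, ⋃ f' ∈ F, ((g * f) • A ∩ f' • A) := by
      rintro x ⟨hx1, hx2⟩
      obtain ⟨y, hy, rfl⟩ := hx1
      obtain ⟨f, hf, a, ha, rfl⟩ := hy
      obtain ⟨f', hf', a', ha', hx⟩ := hx2
      refine Set.mem_biUnion hf (Set.mem_biUnion hf' ⟨?_, ?_⟩)
      · exact ⟨a, ha, by simp [mul_assoc]⟩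
      · exact ⟨a', ha', hx⟩
    by_contra hcon
    apply hg
    apply Set.Finite.subset _ hsub
    refine Set.Finite.biUnion hF fun f hf => Set.Finite.biUnion hF fun f' hf' => ?_
    by_contra hinf
    replace hinf : ((g * f) • A ∩ f' • A).Infinite := hinf
    exact hcon ⟨f' * (f'⁻¹ * (g * f)), ⟨f', hf', f'⁻¹ * (g * f), by
        show ((f'⁻¹ * (g * f)) • A ∩ A).Infinite
        have := hinf.smul_set (a := f'⁻¹)
        rwa [Set.smul_set_inter, smul_smul, smul_smul, inv_mul_cancel, one_smul] at this,
      rfl⟩, f⁻¹, Set.inv_mem_inv.mpr hf, by group⟩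
  · rintro ⟨y, ⟨f, hf, h, hh, rfl⟩, z, hz, rfl⟩
    obtain ⟨f', hf', rfl⟩ : ∃ f' ∈ F, f'⁻¹ = z :=
      ⟨z⁻¹, Set.inv_mem_inv.mp (by simpa using hz), inv_inv z⟩
    show (((f * h * f'⁻¹) • (F * A)) ∩ (F * A)).Infinite
    have hinf : (f • (h • A ∩ A)).Infinite := (hh : (h • A ∩ A).Infinite).smul_set
    apply hinf.mono
    rw [Set.smul_set_inter]
    rintro x ⟨hx1, hx2⟩
    constructor
    · obtain ⟨a, ha, rfl⟩ := hx1
      obtain ⟨b, hb, rfl⟩ := ha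
      exact ⟨f' * b, ⟨f', hf', b, hb, rfl⟩, by simp only [smul_eq_mul]; group⟩
    · obtain ⟨a, ha, rfl⟩ := hx2
      exact ⟨f, hf, a, ha, rfl⟩
end

section
/- Let G be a group and A ⊆ G. Then A is 2-sparse if and only if for every infinite subset X of G, X⁻¹X is not contained in Δ(A) (where X⁻¹X = {x⁻¹y : x, y ∈ X}). -/
open scoped Pointwise

/-- `A` is `k`-sparse if for every infinite `X ⊆ G` there is `F ⊆ X` with `|F| ≤ k`
such that `⋂_{g ∈ F} gA` is finite. -/
def IsSparse {G : Type*} [Group G] (k : ℕ) (A : Set G) : Prop :=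
  ∀ X : Set G, X.Infinite → ∃ F : Set G, F ⊆ X ∧ F.Finite ∧ F.ncard ≤ k ∧
    (⋂ g ∈ F, g • A).Finite

lemma key_iff {G : Type*} [Group G] (A : Set G) (g h : G) :
    (g • A ∩ h • A).Infinite ↔ ((g⁻¹ * h) • A ∩ A).Infinite := by
  rw [← Set.infinite_smul_set (a := g) (s := (g⁻¹ * h) • A ∩ A),
    Set.smul_set_inter, smul_smul]
  simp [Set.inter_comm]

lemma mem_delta_iff {G : Type*} [Group G] (A : Set G) (g h : G) (X : Set G)
    (hg : g ∈ X) (hh : h ∈ X) (hsub : X⁻¹ * X ⊆ Delta A) :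
    (g • A ∩ h • A).Infinite := by
  refine (key_iff A g h).mpr (hsub ⟨g⁻¹, Set.inv_mem_inv.mpr hg, h, hh, rfl⟩)

theorem two_sparse_iff {G : Type*} [Group G] (A : Set G) :
    IsSparse 2 A ↔ ∀ X : Set G, X.Infinite → ¬(X⁻¹ * X ⊆ Delta A) := by
  constructor
  · intro hs X hX hsub
    obtain ⟨F, hFX, hFfin, hcard, hfin⟩ := hs X hX
    rcases Set.eq_empty_or_nonempty F with rfl | ⟨g, hg⟩
    · simp only [Set.mem_empty_iff_false, Set.iInter_of_empty, Set.iInter_univ] at hfin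
      exact (hX.mono (Set.subset_univ X)) hfin
    · rcases Set.eq_singleton_or_nontrivial hg with rfl | hnt
      · rw [Set.biInter_singleton] at hfin
        have h1 : (g • A ∩ g • A).Infinite := mem_delta_iff A g g X (hFX hg) (hFX hg) hsub
        rw [Set.inter_self] at h1
        exact h1 hfin
      · obtain ⟨a, ha, b, hb, hab⟩ := hnt
        have hFeq : ({a, b} : Set G) = F := by
          apply Set.eq_of_subset_of_ncard_le
          · intro x hx; rcases hx with rfl | hx
            · exact ha
            · simp only [Set.mem_singleton_iff] at hx; subst hx; exact hb
          · rw [Set.ncard_pair hab]; exact hcard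
          · exact hFfin
        rw [← hFeq, Set.biInter_pair] at hfin
        exact mem_delta_iff A a b X (hFX ha) (hFX hb) hsub hfin
  · intro h X hX
    by_cases hc : ∃ g ∈ X, ∃ h' ∈ X, (g • A ∩ h' • A).Finite
    · obtain ⟨g, hg, h', hh', hfin⟩ := hc
      by_cases hgh : g = h'
      · subst hgh
        refine ⟨{g}, by simpa using hg, Set.finite_singleton g, by simp, ?_⟩
        rw [Set.biInter_singleton]
        simpa using hfin
      · refine ⟨{g, h'}, ?_, (Set.finite_singleton h').insert g, ?_, ?_⟩
        · intro x hx; rcases hx with rfl | hx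
          · exact hg
          · simp only [Set.mem_singleton_iff] at hx; subst hx; exact hh'
        · exact le_of_eq (Set.ncard_pair hgh)
        · rw [Set.biInter_pair]; exact hfin
    · exfalso
      push_neg at hc
      refine h X hX ?_
      rintro z ⟨gi, hgi, h', hh', rfl⟩
      have hg : gi⁻¹ ∈ X := Set.inv_mem_inv.mp (by simpa using hgi)
      have h2 : (gi⁻¹ • A ∩ h' • A).Infinite := hc _ hg _ hh'
      have := (key_iff A gi⁻¹ h').mp h2
      simpa [Delta] using this
end

section
/- For every infinite group G there exists a 2-thin subset X ⊆ G such that G = XX⁻¹ ∪ X⁻¹X (where XX⁻¹ = {xy⁻¹ : x, y ∈ X} and X⁻¹X = {x⁻¹y : x, y ∈ X}). -/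
open scoped Pointwise

/-- `X` is `k`-thin if `|gX ∩ X| ≤ k` for each `g ∈ G \ {e}`. -/
def IsThin {G : Type*} [Group G] (k : ℕ) (X : Set G) : Prop :=
  ∀ g : G, g ≠ 1 → ((g • X) ∩ X).Finite ∧ ((g • X) ∩ X).ncard ≤ k

/-!
Enumerate `G` as `(g_i)` along the initial ordinal of `|G|`, so that every proper initial segment
is smaller than `G`, and build `X` by transfinite recursion: at stage `i`, unless `g_i` is already
in `YY⁻¹ ∪ Y⁻¹Y` for the set `Y` built so far, add a pair `{x, g_i x}`. The point `x` is chosen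
so that no quotient `uv⁻¹ ≠ 1` involving a new point lies in `YY⁻¹`, and `x⁻¹ g_i x ∉ Y⁻¹Y`;
then a new representation `h = uv⁻¹` only occurs for `h ∉ YY⁻¹`, and at most two of them do, so
2-thinness survives each stage and, being a finitary condition, unions of earlier stages.
Such an `x` exists because fewer than `|G|` points are forbidden: the condition on `x⁻¹ g_i x`
excludes fewer than `|G|` points when the centralizer of `g_i` is small, and none of the
centralizer otherwise.
-/

open Set Cardinal

section Pointwise

variable {G : Type*} [Group G]

theorem isThin_iff_encard_le {k : ℕ} {X : Set G} :
    IsThin k X ↔ ∀ g : G, g ≠ 1 → (g • X ∩ X).encard ≤ k := by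
  simp only [IsThin, encard_le_coe_iff_finite_ncard_le]

theorem IsThin.mono {k : ℕ} {X Y : Set G} (hY : IsThin k Y) (hXY : X ⊆ Y) : IsThin k X := by
  rw [isThin_iff_encard_le] at hY ⊢
  exact fun g hg =>
    (encard_le_encard (inter_subset_inter (smul_set_mono hXY) hXY)).trans (hY g hg)

theorem isThin_iUnion {k : ℕ} {ι : Type*} {X : ι → Set G} (hX : Directed (· ⊆ ·) X)
    (h : ∀ i, IsThin k (X i)) : IsThin k (⋃ i, X i) := by
  simp only [isThin_iff_encard_le] at h ⊢
  intro g hg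
  by_contra! hlt
  obtain ⟨t, hts, htk⟩ := exists_subset_encard_eq (Order.add_one_le_of_lt hlt)
  have htfin : t.Finite := finite_of_encard_eq_coe (k := k + 1) (by simpa using htk)
  obtain ⟨u, hu⟩ : t.Nonempty := nonempty_of_encard_ne_zero (by simp [htk])
  have : Nonempty ι := ⟨(mem_iUnion.1 (hts hu).2).choose⟩
  have hsub : ((htfin.union (htfin.smul_set (a := g⁻¹))).toFinset : Set G) ⊆ ⋃ i, X i := by
    rw [Finite.coe_toFinset]
    refine union_subset (fun u hu => (hts hu).2) ?_
    rintro _ ⟨u, hu, rfl⟩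
    simpa [mem_smul_set_iff_inv_smul_mem] using (hts hu).1
  obtain ⟨i, hi⟩ := hX.exists_mem_subset_of_finset_subset_biUnion hsub
  rw [Finite.coe_toFinset] at hi
  have hti : t ⊆ g • X i ∩ X i := fun u hu =>
    ⟨mem_smul_set_iff_inv_smul_mem.2 (hi (Or.inr (smul_mem_smul_set hu))), hi (Or.inl hu)⟩
  have := (encard_le_encard hti).trans (h i g hg)
  rw [htk] at this
  exact absurd this (by norm_cast; omega)

theorem encard_smul_inter_eq (a : G) (s t : Set G) :
    (a • s ∩ t).encard = (a⁻¹ • t ∩ s).encard := by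
  rw [← encard_smul_set a⁻¹, smul_set_inter, inv_smul_smul, inter_comm]

theorem smul_union_inter_union (a : G) (s t : Set G) :
    a • (s ∪ t) ∩ (s ∪ t) = (a • s ∩ s) ∪ (a • s ∩ t) ∪ (a • t ∩ s) ∪ (a • t ∩ t) := by
  rw [smul_set_union, union_inter_distrib_right, inter_union_distrib_left,
    inter_union_distrib_left, ← union_assoc]

theorem smul_inter_self_eq_empty {a : G} {s : Set G} (ha : a ∉ s * s⁻¹) : a • s ∩ s = ∅ := by
  refine not_nonempty_iff_eq_empty.1 fun hne => ha ?_
  obtain ⟨u, v, ⟨hu, hv⟩, rfl⟩ := smul_inter_nonempty_iff.1 hne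
  exact mul_mem_mul hu (inv_mem_inv.2 hv)

theorem subset_mul_inv_mul (s : Set G) : s ⊆ s * s⁻¹ * s := fun y hy => by
  simpa using mul_mem_mul (mul_mem_mul hy (inv_mem_inv.2 hy)) hy

theorem inv_mem_mul_inv_self {a : G} {s : Set G} : a⁻¹ ∈ s * s⁻¹ ↔ a ∈ s * s⁻¹ := by
  rw [← mem_inv, mul_inv_rev, inv_inv]

theorem mul_inv_union_inv_mul_mono {s t : Set G} (h : s ⊆ t) :
    s * s⁻¹ ∪ s⁻¹ * s ⊆ t * t⁻¹ ∪ t⁻¹ * t :=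
  union_subset_union (mul_subset_mul h (inv_subset_inv.2 h))
    (mul_subset_mul (inv_subset_inv.2 h) h)

theorem smul_pair_inter_pair_eq_empty {g h x : G} (h₁ : h ≠ 1) (hg : h ≠ g) (hg' : h ≠ g⁻¹) :
    h • {x, g * x} ∩ {x, g * x} = (∅ : Set G) := by
  refine eq_empty_of_forall_notMem fun u ⟨hu, hu'⟩ => ?_
  simp only [smul_set_insert, smul_set_singleton, smul_eq_mul, mem_insert_iff,
    mem_singleton_iff] at hu hu'
  rcases hu with rfl | rfl <;> rcases hu' with H | H
  · exact h₁ (by simpa using H)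
  · exact hg (mul_right_cancel H)
  · exact hg' (eq_inv_of_mul_eq_one_left (mul_right_cancel (b := x) (by rwa [one_mul, mul_assoc])))
  · exact h₁ (by simpa using H)

end Pointwise

section Admissible

variable {G : Type*} [Group G] {g h x : G} {Y : Set G}

/-- Conditions on `x` under which the pair `{x, g * x}` can be added to `Y`. -/
def IsAdmissible (g : G) (Y : Set G) (x : G) : Prop :=
  x ∉ g • Y ∧ x ∉ Y * Y⁻¹ * Y ∧ g * x ∉ Y * Y⁻¹ * Y ∧ x⁻¹ * g * x ∉ Y⁻¹ * Y

namespace IsAdmissible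

variable (hx : IsAdmissible g Y x)
include hx

theorem smul_inter_pair_subsingleton (h : G) : (h • Y ∩ {x, g * x}).Subsingleton := by
  suffices ¬ (h⁻¹ * x ∈ Y ∧ h⁻¹ * (g * x) ∈ Y) by
    rintro u ⟨hu, rfl | rfl⟩ v ⟨hv, rfl | rfl⟩ <;>
      simp_all [mem_smul_set_iff_inv_smul_mem]
  rintro ⟨h₁, h₂⟩
  exact hx.2.2.2 (by simpa [mul_assoc] using mul_mem_mul (inv_mem_inv.2 h₁) h₂)

theorem smul_inter_pair_eq_empty (hh : h ∈ Y * Y⁻¹) : h • Y ∩ {x, g * x} = ∅ := by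
  refine eq_empty_of_forall_notMem fun u ⟨hu, hu'⟩ => ?_
  have := smul_set_subset_mul hh hu
  rcases hu' with rfl | rfl
  exacts [hx.2.1 this, hx.2.2.1 this]

theorem self_smul_inter_pair_eq_empty : g • Y ∩ {x, g * x} = ∅ := by
  refine eq_empty_of_forall_notMem fun u ⟨hu, hu'⟩ => ?_
  rcases hu' with rfl | rfl
  · exact hx.1 hu
  · rw [← smul_eq_mul, smul_mem_smul_set_iff] at hu
    exact hx.2.1 (subset_mul_inv_mul Y hu)

end IsAdmissible

/-- With `N = {x, g * x}`: for `h = g` the set `h • (Y ∪ N) ∩ (Y ∪ N)` lies in `g • N`; for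
`h ∉ {g, g⁻¹}` it is `h • Y ∩ Y` if `h ∈ Y * Y⁻¹`, and otherwise the union of `h • Y ∩ N` and
`h • N ∩ Y`, each of size at most one because `x⁻¹ * g * x ∉ Y⁻¹ * Y`. -/
theorem IsThin.union_pair (hY : IsThin 2 Y) (hg : g ∉ Y * Y⁻¹) (hx : IsAdmissible g Y x) :
    IsThin 2 (Y ∪ {x, g * x}) := by
  rw [isThin_iff_encard_le] at hY ⊢
  have hg_self : (g • (Y ∪ {x, g * x}) ∩ (Y ∪ {x, g * x})).encard ≤ 2 := by
    rw [smul_union_inter_union, smul_inter_self_eq_empty hg, hx.self_smul_inter_pair_eq_empty,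
      empty_union, empty_union, ← inter_union_distrib_left]
    calc _ ≤ (g • {x, g * x} : Set G).encard := encard_le_encard inter_subset_left
      _ ≤ 2 := by
        rw [encard_smul_set]
        exact (encard_insert_le _ _).trans (by norm_num)
  intro h h₁
  rcases eq_or_ne h g with rfl | hg₁
  · exact hg_self
  rcases eq_or_ne h g⁻¹ with rfl | hg₂
  · rw [encard_smul_inter_eq, inv_inv]
    exact hg_self
  rw [smul_union_inter_union, smul_pair_inter_pair_eq_empty h₁ hg₁ hg₂, union_empty]
  refine ((encard_union_le _ _).trans (add_le_add (encard_union_le _ _) le_rfl)).trans ?_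
  rw [encard_smul_inter_eq h {x, g * x}]
  by_cases hh : h ∈ Y * Y⁻¹
  · rw [hx.smul_inter_pair_eq_empty hh, hx.smul_inter_pair_eq_empty (inv_mem_mul_inv_self.2 hh)]
    simpa using hY h h₁
  · rw [smul_inter_self_eq_empty hh, encard_empty, zero_add]
    have hb := encard_le_one_iff_subsingleton.2 (hx.smul_inter_pair_subsingleton h)
    have hc := encard_le_one_iff_subsingleton.2 (hx.smul_inter_pair_subsingleton h⁻¹)
    calc _ ≤ (1 : ℕ∞) + 1 := add_le_add hb hc
      _ = 2 := one_add_one_eq_two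

theorem mk_conj_fiber_le (g w : G) : #{x : G | x⁻¹ * g * x = w} ≤ #(centralizer {g}) := by
  rcases eq_empty_or_nonempty {x : G | x⁻¹ * g * x = w} with h | ⟨x₀, hx₀ : x₀⁻¹ * g * x₀ = w⟩
  · simp [h]
  refine (mk_le_mk_of_subset (t := (· * x₀) '' centralizer {g})
    fun x (hx : x⁻¹ * g * x = w) => ⟨x * x₀⁻¹, ?_, inv_mul_cancel_right x x₀⟩).trans mk_image_le
  simp only [mem_centralizer_iff, mem_singleton_iff, forall_eq]
  calc g * (x * x₀⁻¹) = x * (x⁻¹ * g * x) * x₀⁻¹ := by group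
    _ = x * (x₀⁻¹ * g * x₀) * x₀⁻¹ := by rw [hx, hx₀]
    _ = x * x₀⁻¹ * g := by group

theorem mk_conj_preimage_le (g : G) (W : Set G) :
    #{x : G | x⁻¹ * g * x ∈ W} ≤ #W * #(centralizer {g}) := by
  have hsub : {x : G | x⁻¹ * g * x ∈ W} ⊆ ⋃ w ∈ W, {x : G | x⁻¹ * g * x = w} :=
    fun x hx => mem_biUnion hx rfl
  exact (mk_le_mk_of_subset hsub).trans <|
    (mk_biUnion_le _ _).trans (mul_le_mul' le_rfl (ciSup_le' fun w => mk_conj_fiber_le g w))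

theorem exists_notMem_conj_notMem [Infinite G] {Z W : Set G} (hZ : #Z < #G) (hW : #W < #G)
    (hg : g ∉ W) : ∃ x ∉ Z, x⁻¹ * g * x ∉ W := by
  by_contra! hcon
  have hinf := aleph0_le_mk G
  have hC : #(centralizer {g}) < #G := by
    refine (mk_le_mk_of_subset fun c hc => ?_).trans_lt hZ
    by_contra hcZ
    have hcg : c⁻¹ * g * c = g := by
      rw [mul_assoc, (mem_centralizer_iff.1 hc) g rfl, inv_mul_cancel_left]
    exact hg (hcg ▸ hcon c hcZ)
  have hT := (mk_conj_preimage_le g W).trans_lt (mul_lt_of_lt hinf hW hC)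
  have hcover : (Set.univ : Set G) ⊆ Z ∪ {x | x⁻¹ * g * x ∈ W} :=
    fun x _ => (em (x ∈ Z)).imp id (hcon x)
  have := (mk_le_mk_of_subset hcover).trans_lt
    ((mk_union_le _ _).trans_lt (add_lt_of_lt hinf hZ hT))
  rw [mk_univ] at this
  exact lt_irrefl _ this

theorem exists_isAdmissible [Infinite G] (hY : #Y < #G) (hg : g ∉ Y⁻¹ * Y) :
    ∃ x, IsAdmissible g Y x := by
  have hinf := aleph0_le_mk G
  have hYY : #(Y⁻¹ * Y) < #G := mk_mul_le.trans_lt (by rw [mk_inv]; exact mul_lt_of_lt hinf hY hY)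
  have hYYY : #(Y * Y⁻¹ * Y) < #G :=
    mk_mul_le.trans_lt (mul_lt_of_lt hinf
      (mk_mul_le.trans_lt (by rw [mk_inv]; exact mul_lt_of_lt hinf hY hY)) hY)
  have hZ : #(g • Y ∪ Y * Y⁻¹ * Y ∪ g⁻¹ • (Y * Y⁻¹ * Y) : Set G) < #G := by
    refine (mk_union_le _ _).trans_lt (add_lt_of_lt hinf
      ((mk_union_le _ _).trans_lt (add_lt_of_lt hinf ?_ hYYY)) ?_) <;> rwa [mk_smul_set]
  obtain ⟨x, hxZ, hxW⟩ := exists_notMem_conj_notMem hZ hYY hg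
  simp only [mem_union, not_or] at hxZ
  refine ⟨x, hxZ.1.1, hxZ.1.2, fun h => hxZ.2 ?_, hxW⟩
  rwa [mem_smul_set_iff_inv_smul_mem, inv_inv, smul_eq_mul]

end Admissible

namespace ThinCover

section Extension

variable {G : Type*} [Group G] {Y : Set G}

open Classical in
noncomputable def extension (g : G) (Y : Set G) : Set G :=
  if h : g ∉ Y * Y⁻¹ ∪ Y⁻¹ * Y ∧ ∃ x, IsAdmissible g Y x then
    {h.2.choose, g * h.2.choose}
  else ∅

theorem isThin_union_extension (hY : IsThin 2 Y) (g : G) : IsThin 2 (Y ∪ extension g Y) := by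
  unfold extension
  split_ifs with h
  · exact hY.union_pair (fun hg => h.1 (Or.inl hg)) h.2.choose_spec
  · rwa [union_empty]

theorem mk_extension_le (g : G) (Y : Set G) : #(extension g Y) ≤ 2 := by
  unfold extension
  split_ifs
  · exact mk_insert_le.trans (by simp [one_add_one_eq_two])
  · simp

theorem mem_mul_inv_union_inv_mul_union_extension [Infinite G] (hY : #Y < #G) (g : G) :
    g ∈ (Y ∪ extension g Y) * (Y ∪ extension g Y)⁻¹ ∪
      (Y ∪ extension g Y)⁻¹ * (Y ∪ extension g Y) := by
  by_cases hg : g ∈ Y * Y⁻¹ ∪ Y⁻¹ * Y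
  · exact mul_inv_union_inv_mul_mono subset_union_left hg
  have h : g ∉ Y * Y⁻¹ ∪ Y⁻¹ * Y ∧ ∃ x, IsAdmissible g Y x :=
    ⟨hg, exists_isAdmissible hY fun hg' => hg (Or.inr hg')⟩
  have hE : extension g Y = {h.2.choose, g * h.2.choose} := dif_pos h
  have hx : h.2.choose ∈ Y ∪ extension g Y := Or.inr (hE ▸ mem_insert _ _)
  have hgx : g * h.2.choose ∈ Y ∪ extension g Y := Or.inr (hE ▸ mem_insert_of_mem _ rfl)
  exact Or.inl (by simpa using mul_mem_mul hgx (inv_mem_inv.2 hx))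

end Extension

section Recursion

variable {G : Type*} [Group G] {ι : Type*} [LinearOrder ι] [WellFoundedLT ι] (e : ι → G)

noncomputable def addedAt : ι → Set G :=
  wellFounded_lt.fix fun i added => extension (e i) (⋃ j : Iio i, added j j.2)

def addedBefore (i : ι) : Set G := ⋃ j : Iio i, addedAt e j

theorem addedAt_eq (i : ι) : addedAt e i = extension (e i) (addedBefore e i) :=
  wellFounded_lt.fix_eq _ _

theorem monotone_addedBefore_union_addedAt :
    Monotone fun i => addedBefore e i ∪ addedAt e i := by
  intro i j hij
  rcases hij.lt_or_eq with hlt | rfl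
  · refine union_subset (iUnion_subset fun k => ?_) ?_ |>.trans subset_union_left
    · exact subset_iUnion (fun k : Iio j => addedAt e k) ⟨k, k.2.trans hlt⟩
    · exact subset_iUnion (fun k : Iio j => addedAt e k) ⟨i, hlt⟩
  · exact le_rfl

theorem isThin_addedBefore_union_addedAt (i : ι) : IsThin 2 (addedBefore e i ∪ addedAt e i) := by
  induction i using WellFoundedLT.induction with
  | _ i ih =>
  rw [addedAt_eq]
  refine isThin_union_extension ?_ _
  have hmono := (monotone_addedBefore_union_addedAt e).comp (Subtype.mono_coe (· ∈ Iio i))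
  exact (isThin_iUnion hmono.directed_le fun j => ih j j.2).mono
    (iUnion_mono fun j => subset_union_right)

theorem isThin_iUnion_addedAt : IsThin 2 (⋃ i, addedAt e i) :=
  (isThin_iUnion (monotone_addedBefore_union_addedAt e).directed_le
    (isThin_addedBefore_union_addedAt e)).mono (iUnion_mono fun _ => subset_union_right)

end Recursion

section Cover

universe u

variable {G : Type u} [Group G] {ι : Type u} [LinearOrder ι] [WellFoundedLT ι]
  (e : ι → G)

theorem mk_addedBefore_le (i : ι) : #(addedBefore e i) ≤ #(Iio i) * 2 :=
  (mk_iUnion_le _).trans <| mul_le_mul' le_rfl <| ciSup_le' fun j => by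
    rw [addedAt_eq]
    exact mk_extension_le _ _

theorem iUnion_addedAt_cover [Infinite G] (hsmall : ∀ i : ι, #(Iio i) < #G)
    (he : Function.Surjective e) :
    (⋃ i, addedAt e i) * (⋃ i, addedAt e i)⁻¹ ∪ (⋃ i, addedAt e i)⁻¹ * (⋃ i, addedAt e i) =
      Set.univ := by
  refine eq_univ_of_forall fun g => ?_
  obtain ⟨i, rfl⟩ := he g
  have hinf := aleph0_le_mk G
  have hmk : #(addedBefore e i) < #G := (mk_addedBefore_le e i).trans_lt
    (mul_lt_of_lt hinf (hsmall i) ((natCast_lt_aleph0 (n := 2)).trans_le hinf))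
  have hsub : addedBefore e i ∪ addedAt e i ⊆ ⋃ i, addedAt e i :=
    union_subset (iUnion_subset fun j => subset_iUnion _ _) (subset_iUnion _ _)
  have hmem := mem_mul_inv_union_inv_mul_union_extension hmk (e i)
  rw [← addedAt_eq] at hmem
  exact mul_inv_union_inv_mul_mono hsub hmem

end Cover

end ThinCover

theorem exists_two_thin_cover {G : Type*} [Group G] [Infinite G] :
    ∃ X : Set G, IsThin 2 X ∧ X * X⁻¹ ∪ X⁻¹ * X = Set.univ := by
  obtain ⟨e⟩ : Nonempty ((#G).ord.ToType ≃ G) := Cardinal.eq.1 (mk_ord_toType #G)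
  have hsmall (i : (#G).ord.ToType) : #(Iio i) < #G := by
    simpa using mk_Iio_lt i (by rw [mk_ord_toType, Ordinal.type_toType])
  exact ⟨_, ThinCover.isThin_iUnion_addedAt e,
    ThinCover.iUnion_addedAt_cover e hsmall e.surjective⟩
end

section
/- For every infinite group G there exists a 4-thin subset X ⊆ G such that G = XX⁻¹ (where XX⁻¹ = {xy⁻¹ : x, y ∈ X}). -/
open scoped Pointwise

namespace FourThinAux

open Set Cardinal

universe u

variable {G : Type u} [Group G]

/-- Quotients to be avoided when choosing a new element at a step with target `g`
and previously chosen set `P`. -/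
def badQ (g : G) (P : Set G) : Set G := P * P⁻¹ ∪ {1, g, g⁻¹}

/-- The set of forbidden choices for the new element `x`. -/
def bad (g : G) (P : Set G) : Set G :=
  badQ g P * P ∪ (badQ g P)⁻¹ * P ∪ g • (badQ g P * P) ∪ g • ((badQ g P)⁻¹ * P)

lemma one_mem_badQ (g : G) (P : Set G) : (1 : G) ∈ badQ g P :=
  Set.mem_union_right _ (by simp)

lemma mem_badQ_of_mem_mul {g q : G} {P : Set G} (h : q ∈ P * P⁻¹) : q ∈ badQ g P :=
  Set.mem_union_left _ h

lemma g_mem_badQ (g : G) (P : Set G) : g ∈ badQ g P :=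
  Set.mem_union_right _ (by simp)

lemma ginv_mem_badQ (g : G) (P : Set G) : g⁻¹ ∈ badQ g P :=
  Set.mem_union_right _ (by simp)

/-- Freshness: if `x ∉ bad g P` then all quotients between elements of the new pair
`{x, g⁻¹ * x}` and elements of `P` avoid `badQ g P`. -/
lemma fresh {g x : G} {P : Set G} (hx : x ∉ bad g P) :
    ∀ n ∈ ({x, g⁻¹ * x} : Set G), ∀ m ∈ P,
      n * m⁻¹ ∉ badQ g P ∧ m * n⁻¹ ∉ badQ g P := by
  intro n hn m hm
  constructor
  · intro hq
    have hmem : n ∈ badQ g P * P := by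
      have : (n * m⁻¹) * m ∈ badQ g P * P := Set.mul_mem_mul hq hm
      simpa [inv_mul_cancel_right] using this
    rcases hn with rfl | rfl
    · exact hx (Set.mem_union_left _ (Set.mem_union_left _ (Set.mem_union_left _ hmem)))
    · have : x ∈ g • (badQ g P * P) := by
        have := Set.smul_mem_smul_set (a := g) hmem
        simpa [smul_eq_mul, mul_inv_cancel_left] using this
      exact hx (Set.mem_union_left _ (Set.mem_union_right _ this))
  · intro hq
    have hmem : n ∈ (badQ g P)⁻¹ * P := by
      have : (m * n⁻¹)⁻¹ * m ∈ (badQ g P)⁻¹ * P :=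
        Set.mul_mem_mul (Set.inv_mem_inv.2 hq) hm
      simpa [mul_inv_rev, mul_assoc] using this
    rcases hn with rfl | rfl
    · exact hx (Set.mem_union_left _ (Set.mem_union_left _ (Set.mem_union_right _ hmem)))
    · have : x ∈ g • ((badQ g P)⁻¹ * P) := by
        have := Set.smul_mem_smul_set (a := g) hmem
        simpa [smul_eq_mul, mul_inv_cancel_left] using this
      exact hx (Set.mem_union_right _ this)

open scoped Classical in
/-- The set of (at most two) elements added at a step with target `g`, given the
set `P` of previously added elements. -/
noncomputable def stepSet (g : G) (P : Set G) : Set G :=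
  if g ∈ P * P⁻¹ then ∅
  else if h : ∃ x, x ∉ bad g P then {h.choose, g⁻¹ * h.choose} else ∅

variable {W : Type u} [LinearOrder W] [WellFoundedLT W]

/-- The transfinite recursion producing the family of added pairs. -/
noncomputable def fam (e : W → G) : W → Set G :=
  (wellFounded_lt (α := W)).fix fun w rec => stepSet (e w) (⋃ v : Set.Iio w, rec v.1 v.2)

/-- All elements added before step `w`. -/
noncomputable def prior (e : W → G) (w : W) : Set G := ⋃ v : Set.Iio w, fam e v.1

lemma fam_eq (e : W → G) (w : W) : fam e w = stepSet (e w) (prior e w) :=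
  WellFounded.fix_eq _ _ _

lemma fam_subset_prior (e : W → G) {v w : W} (h : v < w) : fam e v ⊆ prior e w :=
  Set.subset_iUnion (fun u : Set.Iio w => fam e u.1) ⟨v, h⟩

/-- Structure of a nonempty step. -/
lemma fam_spec (e : W → G) (w : W) {a : G} (ha : a ∈ fam e w) :
    e w ∉ prior e w * (prior e w)⁻¹ ∧
      ∃ x, x ∉ bad (e w) (prior e w) ∧ fam e w = {x, (e w)⁻¹ * x} := by
  classical
  rw [fam_eq] at ha ⊢
  unfold stepSet at ha ⊢
  split_ifs at ha ⊢ with h1 h2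
  · exact absurd ha (Set.notMem_empty a)
  · exact ⟨h1, h2.choose, h2.choose_spec, rfl⟩
  · exact absurd ha (Set.notMem_empty a)

lemma fresh_at (e : W → G) {w : W} {n : G} (hn : n ∈ fam e w) {m : G}
    (hm : m ∈ prior e w) :
    n * m⁻¹ ∉ badQ (e w) (prior e w) ∧ m * n⁻¹ ∉ badQ (e w) (prior e w) := by
  obtain ⟨-, x, hx, hfam⟩ := fam_spec e w hn
  exact fresh hx n (hfam ▸ hn) m hm

lemma fam_small (e : W → G) (w : W) : #(fam e w) ≤ 2 := by
  classical
  rw [fam_eq]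
  unfold stepSet
  split_ifs with h1 h2
  · simp
  · refine le_trans (mk_insert_le) ?_
    simp only [mk_singleton]
    norm_num
  · simp

lemma fam_finite (e : W → G) (w : W) : (fam e w).Finite := by
  classical
  rw [fam_eq]
  unfold stepSet
  split_ifs with h1 h2
  · exact Set.finite_empty
  · exact (Set.finite_singleton _).insert _
  · exact Set.finite_empty

lemma fam_ncard (e : W → G) (w : W) : (fam e w).ncard ≤ 2 := by
  classical
  rw [fam_eq]
  unfold stepSet
  split_ifs with h1 h2
  · simp
  · refine le_trans (Set.ncard_insert_le _ _) ?_
    simp [Set.ncard_singleton]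
  · simp

section Counting

variable (e : W → G)

/-- `q` has a representation whose later element was created at step `w`. -/
def RepAt (q : G) (w : W) : Prop :=
  ∃ a b wa wb, a ∈ fam e wa ∧ b ∈ fam e wb ∧ a * b⁻¹ = q ∧ w = max wa wb

lemma repAt_not_lt {q : G} (hq : q ≠ 1) {w1 w2 : W}
    (h1 : RepAt e q w1) (h2 : RepAt e q w2) : ¬ w1 < w2 := by
  intro hlt
  obtain ⟨a1, b1, wa1, wb1, ha1, hb1, hq1, hw1⟩ := h1
  obtain ⟨a2, b2, wa2, wb2, ha2, hb2, hq2, hw2⟩ := h2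
  -- From rep 1, q is a quotient of elements created before step w2
  have ha1' : a1 ∈ prior e w2 :=
    fam_subset_prior e (lt_of_le_of_lt (le_trans (le_max_left wa1 wb1) hw1.ge) hlt) ha1
  have hb1' : b1 ∈ prior e w2 :=
    fam_subset_prior e (lt_of_le_of_lt (le_trans (le_max_right wa1 wb1) hw1.ge) hlt) hb1
  have hqQ : q ∈ prior e w2 * (prior e w2)⁻¹ := by
    rw [← hq1]; exact Set.mul_mem_mul ha1' (Set.inv_mem_inv.2 hb1')
  have hqQ' : q⁻¹ ∈ prior e w2 * (prior e w2)⁻¹ := by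
    rw [← hq1, mul_inv_rev, inv_inv]
    exact Set.mul_mem_mul hb1' (Set.inv_mem_inv.2 ha1')
  -- Analyze rep 2
  rcases lt_trichotomy wa2 wb2 with hc | hc | hc
  · -- later element is b2, at step wb2 = w2
    have hmax : w2 = wb2 := by rw [hw2, max_eq_right hc.le]
    subst hmax
    have := (fresh_at e hb2 (fam_subset_prior e hc ha2)).2
    rw [hq2] at this
    exact this (mem_badQ_of_mem_mul hqQ)
  · -- same step: q = e w2 or q = (e w2)⁻¹, contradicting activity
    subst hc
    have hmax : w2 = wa2 := by rw [hw2, max_self]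
    subst hmax
    obtain ⟨hact, x, hx, hfam⟩ := fam_spec e w2 ha2
    rw [hfam] at ha2 hb2
    have hab : a2 ≠ b2 := fun h => hq (by rw [← hq2, h, mul_inv_cancel])
    rcases ha2 with rfl | rfl <;> rcases hb2 with rfl | rfl
    · exact hab rfl
    · -- q = x * (g⁻¹x)⁻¹ = e w2
      have : q = e w2 := by
        rw [← hq2, mul_inv_rev, inv_inv, ← mul_assoc, mul_inv_cancel, one_mul]
      exact hact (this ▸ hqQ)
    · -- q = (g⁻¹x) * x⁻¹ = (e w2)⁻¹
      have : q = (e w2)⁻¹ := by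
        rw [← hq2, mul_assoc, mul_inv_cancel, mul_one]
      have : e w2 = q⁻¹ := by rw [this, inv_inv]
      exact hact (this ▸ hqQ')
    · exact hab rfl
  · -- later element is a2, at step wa2 = w2
    have hmax : w2 = wa2 := by rw [hw2, max_eq_left hc.le]
    subst hmax
    have := (fresh_at e ha2 (fam_subset_prior e hc hb2)).1
    rw [hq2] at this
    exact this (mem_badQ_of_mem_mul hqQ)

lemma repAt_unique {q : G} (hq : q ≠ 1) {w1 w2 : W}
    (h1 : RepAt e q w1) (h2 : RepAt e q w2) : w1 = w2 :=
  le_antisymm (not_lt.1 (repAt_not_lt e hq h2 h1)) (not_lt.1 (repAt_not_lt e hq h1 h2))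

theorem isThin_iUnion_fam : IsThin 4 (⋃ w, fam e w) := by
  intro q hq
  set X : Set G := ⋃ w, fam e w with hX
  -- each element of q•X ∩ X gives a representation of q
  have key : ∀ a ∈ (q • X) ∩ X, ∃ wa wb, a ∈ fam e wa ∧ q⁻¹ * a ∈ fam e wb ∧
      RepAt e q (max wa wb) := by
    intro a ha
    obtain ⟨haq, haX⟩ := ha
    have hb : q⁻¹ * a ∈ X := by
      rwa [Set.mem_smul_set_iff_inv_smul_mem, smul_eq_mul] at haq
    obtain ⟨wa, hwa⟩ := Set.mem_iUnion.1 haX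
    obtain ⟨wb, hwb⟩ := Set.mem_iUnion.1 hb
    refine ⟨wa, wb, hwa, hwb, a, q⁻¹ * a, wa, wb, hwa, hwb, ?_, rfl⟩
    rw [mul_inv_rev, inv_inv, ← mul_assoc, mul_inv_cancel, one_mul]
  rcases Set.eq_empty_or_nonempty ((q • X) ∩ X) with hemp | ⟨a0, ha0⟩
  · rw [hemp]; exact ⟨Set.finite_empty, by simp⟩
  · obtain ⟨wa0, wb0, -, -, hrep0⟩ := key a0 ha0
    set w : W := max wa0 wb0 with hw
    have hsub : (q • X) ∩ X ⊆ fam e w ∪ q • fam e w := by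
      intro a ha
      obtain ⟨wa, wb, hwa, hwb, hrep⟩ := key a ha
      have heq : max wa wb = w := repAt_unique e hq hrep hrep0
      rcases max_cases wa wb with ⟨hm, -⟩ | ⟨hm, -⟩
      · rw [hm] at heq
        left; exact heq ▸ hwa
      · rw [hm] at heq
        right
        refine ⟨q⁻¹ * a, heq ▸ hwb, ?_⟩
        simp [smul_eq_mul, mul_inv_cancel_left]
    have hfin : (fam e w ∪ q • fam e w).Finite :=
      (fam_finite e w).union ((fam_finite e w).smul_set)
    refine ⟨hfin.subset hsub, ?_⟩
    refine le_trans (Set.ncard_le_ncard hsub hfin) ?_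
    refine le_trans (Set.ncard_union_le _ _) ?_
    have h1 : (fam e w).ncard ≤ 2 := fam_ncard e w
    have h2 : (q • fam e w).ncard ≤ 2 := by
      rw [← Set.image_smul]
      exact le_trans (Set.ncard_image_le (fam_finite e w)) h1
    omega

end Counting

section Cover

variable [Infinite G] (e : W → G)

lemma prior_small (hsm : ∀ w : W, #(Set.Iio w) < #G) (w : W) :
    #(prior e w) < #G := by
  have h1 : #(prior e w) ≤ #(Set.Iio w) * 2 := by
    refine le_trans mk_iUnion_le_sum_mk ?_
    refine le_trans (sum_le_sum _ _ fun v => fam_small e v.1) ?_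
    rw [sum_const']
  have h2 : (2 : Cardinal) < #G :=
    lt_of_lt_of_le (by exact_mod_cast nat_lt_aleph0 2) (aleph0_le_mk G)
  exact lt_of_le_of_lt h1 (mul_lt_of_lt (aleph0_le_mk G) (hsm w) h2)

lemma badQ_small {P : Set G} (hP : #P < #G) (g : G) : #(badQ g P) < #G := by
  have hℵ : ℵ₀ ≤ #G := aleph0_le_mk G
  refine lt_of_le_of_lt (mk_union_le _ _) (add_lt_of_lt hℵ ?_ ?_)
  · exact lt_of_le_of_lt mk_image2_le (mul_lt_of_lt hℵ hP (by
      have : #(P⁻¹ : Set G) ≤ #P := by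
        rw [← Set.image_inv_eq_inv]
        exact mk_image_le
      exact lt_of_le_of_lt this hP))
  · refine lt_of_lt_of_le ?_ hℵ
    exact (Set.toFinite _).lt_aleph0

lemma bad_small {P : Set G} (hP : #P < #G) (g : G) : #(bad g P) < #G := by
  have hℵ : ℵ₀ ≤ #G := aleph0_le_mk G
  have hQ : #(badQ g P) < #G := badQ_small hP g
  have hQinv : #((badQ g P)⁻¹ : Set G) < #G := by
    refine lt_of_le_of_lt ?_ hQ
    rw [← Set.image_inv_eq_inv]; exact mk_image_le
  have hQP : #(badQ g P * P) < #G :=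
    lt_of_le_of_lt mk_image2_le (mul_lt_of_lt hℵ hQ hP)
  have hQiP : #((badQ g P)⁻¹ * P) < #G :=
    lt_of_le_of_lt mk_image2_le (mul_lt_of_lt hℵ hQinv hP)
  have hs1 : #(g • (badQ g P * P) : Set G) < #G := by
    refine lt_of_le_of_lt ?_ hQP
    rw [← Set.image_smul]; exact mk_image_le
  have hs2 : #(g • ((badQ g P)⁻¹ * P) : Set G) < #G := by
    refine lt_of_le_of_lt ?_ hQiP
    rw [← Set.image_smul]; exact mk_image_le
  unfold bad
  refine lt_of_le_of_lt (mk_union_le _ _) (add_lt_of_lt hℵ ?_ hs2)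
  refine lt_of_le_of_lt (mk_union_le _ _) (add_lt_of_lt hℵ ?_ hs1)
  exact lt_of_le_of_lt (mk_union_le _ _) (add_lt_of_lt hℵ hQP hQiP)

lemma exists_not_bad {P : Set G} (hP : #P < #G) (g : G) : ∃ x, x ∉ bad g P := by
  by_contra h
  push_neg at h
  have huniv : bad g P = Set.univ := Set.eq_univ_of_forall h
  have hlt := bad_small hP g
  rw [huniv, mk_univ] at hlt
  exact lt_irrefl _ hlt

theorem cover (hsur : Function.Surjective e) (hsm : ∀ w : W, #(Set.Iio w) < #G) :
    (⋃ w, fam e w) * (⋃ w, fam e w)⁻¹ = Set.univ := by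
  set X : Set G := ⋃ w, fam e w with hX
  rw [Set.eq_univ_iff_forall]
  intro g
  obtain ⟨w, rfl⟩ := hsur g
  have hXsub : prior e w ⊆ X := Set.iUnion_subset fun v => Set.subset_iUnion (fam e) v.1
  by_cases hg : e w ∈ prior e w * (prior e w)⁻¹
  · exact Set.mul_subset_mul hXsub (Set.inv_subset_inv.2 hXsub) hg
  · classical
    have hex : ∃ x, x ∉ bad (e w) (prior e w) := exists_not_bad (prior_small e hsm w) _
    have hfam : fam e w = {hex.choose, (e w)⁻¹ * hex.choose} := by
      rw [fam_eq]
      unfold stepSet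
      rw [if_neg hg, dif_pos hex]
    set x := hex.choose
    have hx : x ∈ X := Set.mem_iUnion.2 ⟨w, by rw [hfam]; exact Set.mem_insert _ _⟩
    have hy : (e w)⁻¹ * x ∈ X := Set.mem_iUnion.2 ⟨w, by
      rw [hfam]; exact Set.mem_insert_iff.2 (Or.inr rfl)⟩
    have : e w = x * ((e w)⁻¹ * x)⁻¹ := by
      rw [mul_inv_rev, inv_inv, ← mul_assoc, mul_inv_cancel, one_mul]
    rw [this]
    exact Set.mul_mem_mul hx (Set.inv_mem_inv.2 hy)

end Cover

end FourThinAux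

theorem exists_four_thin_cover {G : Type*} [Group G] [Infinite G] :
    ∃ X : Set G, IsThin 4 X ∧ X * X⁻¹ = Set.univ := by
  classical
  obtain ⟨e⟩ : Nonempty ((Cardinal.mk G).ord.ToType ≃ G) :=
    Cardinal.eq.1 (Cardinal.mk_ord_toType (Cardinal.mk G))
  refine ⟨⋃ w, FourThinAux.fam (⇑e) w, FourThinAux.isThin_iUnion_fam (⇑e),
    FourThinAux.cover (⇑e) e.surjective fun w => Cardinal.mk_Iio_ord_toType w⟩
end

section
/- Let G be a group and let A ⊆ G be an almost thin subset, so that Δ(A) is finite, say |Δ(A)| = n ≥ 1. Then A can be partitioned into at most 3^(n−1) thin subsets. -/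
open scoped Pointwise


-- Step 1: coloring lemma
lemma exists_coloring {G : Type*} [Group G] (g : G) (hg : g ≠ 1) :
    ∃ c : G → Fin 3, ∀ a, c (g * a) ≠ c a := by
  classical
  let s : Setoid G := ⟨fun a b => ∃ k : ℤ, b = g ^ k * a,
    ⟨fun a => ⟨0, by simp⟩,
     fun {a b} h => by obtain ⟨k, hk⟩ := h; exact ⟨-k, by rw [hk]; group⟩,
     fun {a b c} h1 h2 => by
       obtain ⟨k, hk⟩ := h1; obtain ⟨l, hl⟩ := h2
       exact ⟨l + k, by rw [hl, hk]; group⟩⟩⟩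
  let r : G → G := fun a => (Quotient.mk s a).out
  have hrel : ∀ a, ∃ k : ℤ, a = g ^ k * r a := by
    intro a
    have h : Quotient.mk s ((Quotient.mk s a).out) = Quotient.mk s a :=
      Quotient.out_eq _
    exact Quotient.exact h
  let κ : G → ℤ := fun a => (hrel a).choose
  have hκ : ∀ a, a = g ^ (κ a) * r a := fun a => (hrel a).choose_spec
  have hrg : ∀ a, r (g * a) = r a := by
    intro a
    have h : Quotient.mk s (g * a) = Quotient.mk s a :=
      Quotient.sound ⟨-1, by group⟩
    simp only [r, h]
  have key : ∀ a, (orderOf g : ℤ) ∣ κ (g * a) - (κ a + 1) := by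
    intro a
    have h1 : g ^ (κ (g * a)) * r a = g ^ (κ a + 1) * r a := by
      conv_lhs => rw [← hrg a, ← hκ (g * a)]
      rw [add_comm (κ a) 1, zpow_add, zpow_one, mul_assoc, ← hκ a]
    have h2 : g ^ (κ (g * a)) = g ^ (κ a + 1) := mul_right_cancel h1
    have h3 : g ^ (κ (g * a) - (κ a + 1)) = 1 := by
      rw [zpow_sub, h2]
      group
    exact orderOf_dvd_iff_zpow_eq_one.mpr h3
  have hm1 : orderOf g ≠ 1 := fun h => hg (orderOf_eq_one_iff.mp h)
  by_cases h0 : orderOf g = 0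
  · refine ⟨fun a => if Even (κ a) then 0 else 1, fun a => ?_⟩
    have hk : κ (g * a) = κ a + 1 := by
      have := key a
      rw [h0] at this
      simpa [sub_eq_zero] using this
    simp only [hk]
    by_cases he : Even (κ a) <;> simp [he, Int.even_add_one]
  · have hm2 : 2 ≤ orderOf g := by omega
    set m : ℤ := (orderOf g : ℤ) with hmdef
    have h2m : (2 : ℤ) ≤ m := by rw [hmdef]; exact_mod_cast hm2
    have hmpos : (0 : ℤ) < m := by omega
    let ν : G → ℤ := fun a => κ a % m
    have hν0 : ∀ a, 0 ≤ ν a := fun a => Int.emod_nonneg _ (ne_of_gt hmpos)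
    have hνlt : ∀ a, ν a < m := fun a => Int.emod_lt_of_pos _ hmpos
    have hstep : ∀ a, ν (g * a) = ν a + 1 ∨ (ν a = m - 1 ∧ ν (g * a) = 0) := by
      intro a
      have hmod : ν (g * a) = (ν a + 1) % m := by
        have h1 : κ (g * a) % m = (κ a + 1) % m :=
          (Int.modEq_iff_dvd.mpr (key a)).symm
        have hdm := Int.mul_ediv_add_emod (κ a) m
        have h2 : (κ a + 1) % m = (ν a + 1) % m := by
          have : κ a + 1 = ν a + 1 + m * (κ a / m) := by
            simp only [ν]; omega
          rw [this, Int.add_mul_emod_self_left]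
        exact h1.trans h2
      by_cases hedge : ν a = m - 1
      · right
        refine ⟨hedge, ?_⟩
        rw [hmod, hedge]
        simp
      · left
        rw [hmod, Int.emod_eq_of_lt (by have := hν0 a; omega)
          (by have := hνlt a; omega)]
    refine ⟨fun a => if ν a = m - 1 then 2 else if Even (ν a) then 0 else 1,
      fun a => ?_⟩
    dsimp only
    rcases hstep a with h | ⟨h1, h2⟩
    · have hne : ν a ≠ m - 1 := by have := hνlt (g * a); omega
      rw [h, if_neg hne]
      by_cases hE : ν a + 1 = m - 1
      · rw [if_pos hE]
        by_cases he : Even (ν a) <;> simp [he]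
      · rw [if_neg hE]
        have hpar : Even (ν a + 1) ↔ ¬ Even (ν a) := Int.even_add_one
        by_cases he : Even (ν a) <;> simp [he, hpar]
    · rw [h2, if_neg (by omega : (0:ℤ) ≠ m - 1), if_pos (by decide : Even (0:ℤ)),
        if_pos h1]
      decide


/-- `A` is thin if `A` is finite or `Δ(A) = {e}`. -/
def IsThinSet {G : Type*} [Group G] (A : Set G) : Prop :=
  A.Finite ∨ Delta A = {1}

theorem almost_thin_partition {G : Type*} [Group G] (A : Set G) (n : ℕ)
    (hn : 1 ≤ n) (hfin : (Delta A).Finite) (hcard : (Delta A).ncard = n) :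
    ∃ P : Set (Set G), P.Finite ∧ P.ncard ≤ 3 ^ (n - 1) ∧
      (∀ B ∈ P, IsThinSet B) ∧
      (∀ B ∈ P, ∀ C ∈ P, B ≠ C → Disjoint B C) ∧
      ⋃₀ P = A := by
  classical
  have hne : (Delta A).Nonempty := (Set.ncard_pos hfin).mp (by omega)
  obtain ⟨g₀, hg₀⟩ := hne
  have hAinf : A.Infinite := (hg₀ : ((g₀ • A) ∩ A).Infinite).mono
    Set.inter_subset_right
  have h1 : (1 : G) ∈ Delta A := by
    simpa [Delta, one_smul] using hAinf
  have hcol : ∀ g : G, ∃ c : G → Fin 3, g ≠ 1 → ∀ a, c (g * a) ≠ c a := by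
    intro g
    by_cases hg : g = 1
    · exact ⟨fun _ => 0, fun h => absurd hg h⟩
    · obtain ⟨c, hc⟩ := exists_coloring g hg
      exact ⟨c, fun _ => hc⟩
  choose c hc using hcol
  set D : Finset G := hfin.toFinset.erase 1 with hD
  have h1D : (1 : G) ∈ hfin.toFinset := hfin.mem_toFinset.mpr h1
  have hDcard : D.card = n - 1 := by
    rw [hD, Finset.card_erase_of_mem h1D, ← Set.ncard_eq_toFinset_card _ hfin, hcard]
  let χ : G → (↥D → Fin 3) := fun a i => c i a
  set P : Set (Set G) := (fun f : ↥D → Fin 3 => {a ∈ A | χ a = f}) '' Set.univ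
    with hP
  refine ⟨P, Set.finite_univ.image _, ?_, ?_, ?_, ?_⟩
  · calc P.ncard ≤ (Set.univ : Set (↥D → Fin 3)).ncard :=
        Set.ncard_image_le Set.finite_univ
      _ = 3 ^ (n - 1) := by
        rw [Set.ncard_univ, Nat.card_eq_fintype_card, Fintype.card_fun,
          Fintype.card_fin, Fintype.card_coe, hDcard]
  · rintro B ⟨f, -, rfl⟩
    by_cases hB : ({a ∈ A | χ a = f} : Set G).Finite
    · exact Or.inl hB
    · right
      ext g
      simp only [Set.mem_singleton_iff]
      constructor
      · intro hgB
        by_contra hg1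
        have hsub : (g • {a ∈ A | χ a = f} : Set G) ∩ {a ∈ A | χ a = f}
            ⊆ (g • A) ∩ A := by
          apply Set.inter_subset_inter
          · exact Set.smul_set_mono (fun x hx => hx.1)
          · exact fun x hx => hx.1
        have hgA : g ∈ Delta A := (hgB : Set.Infinite _).mono hsub
        have hgD : g ∈ D := Finset.mem_erase.mpr ⟨hg1, hfin.mem_toFinset.mpr hgA⟩
        obtain ⟨x, hx⟩ := (hgB : Set.Infinite _).nonempty
        obtain ⟨⟨b, hb, rfl⟩, hgb⟩ := hx
        have heq1 : χ (g • b) ⟨g, hgD⟩ = f ⟨g, hgD⟩ := by rw [hgb.2]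
        have heq2 : χ b ⟨g, hgD⟩ = f ⟨g, hgD⟩ := by rw [hb.2]
        have : c g (g * b) = c g b := by
          have : g • b = g * b := rfl
          rw [this] at heq1
          exact heq1.trans heq2.symm
        exact hc g hg1 b this
      · rintro rfl
        simp only [Delta, Set.mem_setOf_eq, one_smul, Set.inter_self]
        exact hB
  · rintro B ⟨f, -, rfl⟩ C ⟨f', -, rfl⟩ hne
    rw [Set.disjoint_left]
    rintro a ⟨ha, haf⟩ ⟨ha', haf'⟩
    exact hne (by rw [← haf, ← haf'])
  · ext a
    simp only [Set.mem_sUnion, hP, Set.mem_image, Set.mem_univ, true_and]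
    constructor
    · rintro ⟨B, ⟨f, rfl⟩, ha, -⟩
      exact ha
    · intro ha
      exact ⟨{b ∈ A | χ b = χ a}, ⟨χ a, rfl⟩, ha, rfl⟩
end

section
/- Let G be an infinite Abelian group and let A ⊆ G be a subset that is not small. Then A is Δ-large. -/
open scoped Pointwise

/-- `A` is large if `G = FA` for some finite `F ⊆ G`. -/
def IsLarge {G : Type*} [Group G] (A : Set G) : Prop :=
  ∃ F : Set G, F.Finite ∧ F * A = Set.univ

/-- `A` is small if `(G \ A) ∩ L` is large for every large `L ⊆ G`. -/
def IsSmall {G : Type*} [Group G] (A : Set G) : Prop :=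
  ∀ L : Set G, IsLarge L → IsLarge ((Set.univ \ A) ∩ L)

/-- If `B` is not large then its complement is thick: every finite set has a
translate avoiding `B`. -/
lemma thick_of_not_large {G : Type*} [Group G] {B : Set G} (h : ¬ IsLarge B)
    (S : Finset G) : ∃ x : G, ∀ s ∈ S, s * x ∉ B := by
  by_contra hc
  push_neg at hc
  apply h
  refine ⟨(↑S)⁻¹, (S.finite_toSet).inv, ?_⟩
  apply Set.eq_univ_of_forall
  intro x
  obtain ⟨s, hs, hsx⟩ := hc x
  have : s⁻¹ * (s * x) ∈ (↑S)⁻¹ * B :=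
    Set.mul_mem_mul (Set.inv_mem_inv.2 hs) hsx
  simpa using this

theorem nonsmall_is_delta_large_abelian {G : Type*} [CommGroup G] [Infinite G]
    (A : Set G) (hA : ¬IsSmall A) :
    IsLarge (Delta A) := by
  classical
  rw [IsSmall] at hA
  push_neg at hA
  obtain ⟨L, ⟨F, hFfin, hFL⟩, hnot⟩ := hA
  -- Step 1: `F * A` is thick.
  have hthick : ∀ S : Finset G, ∃ x : G, ∀ s ∈ S, s * x ∈ F * A := by
    intro S
    obtain ⟨x, hx⟩ := thick_of_not_large hnot (hFfin.toFinset⁻¹ * S)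
    refine ⟨x, fun s hs => ?_⟩
    have hsx : s * x ∈ F * L := by rw [hFL]; trivial
    obtain ⟨f, hf, l, hl, hfl⟩ := hsx
    have hmem : (f⁻¹ * s) * x ∉ (Set.univ \ A) ∩ L := by
      apply hx
      exact Finset.mul_mem_mul (by simp [hFfin.mem_toFinset, hf]) hs
    have hfsl : (f⁻¹ * s) * x = l := by
      rw [mul_assoc]; rw [← hfl]; group
    have hlA : l ∈ A := by
      by_contra hla
      exact hmem (by rw [hfsl]; exact ⟨⟨trivial, hla⟩, hl⟩)
    have : s * x = f * l := hfl.symm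
    rw [this]
    exact Set.mul_mem_mul hf hlA
  -- Step 2: `Delta (F * A) = univ` since `F * A` is thick.
  have hdelta : ∀ g : G, ((g • (F * A)) ∩ (F * A)).Infinite := by
    intro g
    by_contra hcon
    rw [Set.not_infinite] at hcon
    set E := hcon.toFinset with hE
    obtain ⟨H, hH⟩ := Infinite.exists_subset_card_eq G (E.card + 1)
    obtain ⟨x, hx⟩ := hthick (H ∪ H.image (g⁻¹ * ·))
    have hsub : H.image (· * x) ⊆ E := by
      intro y hy
      obtain ⟨h, hh, rfl⟩ := Finset.mem_image.1 hy
      have h1 : h * x ∈ F * A := hx h (Finset.mem_union_left _ hh)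
      have h2 : (g⁻¹ * h) * x ∈ F * A := by
        apply hx
        exact Finset.mem_union_right _ (Finset.mem_image_of_mem _ hh)
      rw [hE, Set.Finite.mem_toFinset]
      refine ⟨⟨g⁻¹ * h * x, h2, ?_⟩, h1⟩
      simp [smul_eq_mul, mul_assoc]
    have hcard : (H.image (· * x)).card = E.card + 1 := by
      rw [Finset.card_image_of_injective _ (mul_left_injective x), hH]
    have := Finset.card_le_card hsub
    omega
  -- Step 3: `Delta (F * A) ⊆ (F * F⁻¹) * Delta A`.
  refine ⟨F * F⁻¹, hFfin.mul hFfin.inv, ?_⟩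
  apply Set.eq_univ_of_forall
  intro g
  have hg := hdelta g
  -- find f1 f2 ∈ F with `((g * f1) • A ∩ f2 • A)` infinite
  have hex : ∃ f1 ∈ F, ∃ f2 ∈ F, (((g * f1) • A) ∩ (f2 • A)).Infinite := by
    by_contra hc
    push_neg at hc
    apply hg
    have hsub : (g • (F * A)) ∩ (F * A) ⊆
        ⋃ f1 ∈ F, ⋃ f2 ∈ F, (((g * f1) • A) ∩ (f2 • A)) := by
      rintro y ⟨⟨z, hz, rfl⟩, hy2⟩
      obtain ⟨f1, hf1, a, ha, rfl⟩ := hz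
      obtain ⟨f2, hf2, b, hb, hfb⟩ := hy2
      refine Set.mem_biUnion hf1 (Set.mem_biUnion hf2 ⟨⟨a, ha, by simp [mul_assoc, smul_eq_mul]⟩, ?_⟩)
      exact ⟨b, hb, hfb⟩
    apply Set.Finite.subset _ hsub
    exact hFfin.biUnion fun f1 hf1 => hFfin.biUnion fun f2 hf2 => hc f1 hf1 f2 hf2
  obtain ⟨f1, hf1, f2, hf2, hinf⟩ := hex
  have hd : f2⁻¹ * (g * f1) ∈ Delta A := by
    have h1 : (f2⁻¹ * (g * f1)) • A ∩ A = f2⁻¹ • ((((g * f1) • A) ∩ (f2 • A))) := by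
      rw [Set.smul_set_inter, ← smul_smul, inv_smul_smul]
    show ((f2⁻¹ * (g * f1)) • A ∩ A).Infinite
    rw [h1]
    exact hinf.smul_set
  have hgeq : g = (f2 * f1⁻¹) * (f2⁻¹ * (g * f1)) := by simp [mul_comm, mul_left_comm, mul_assoc]
  rw [hgeq]
  exact Set.mul_mem_mul (Set.mul_mem_mul hf2 (Set.inv_mem_inv.2 hf1)) hd
end

section
/- Let G be an infinite group and let G = A₁ ∪ … ∪ Aₙ be a partition of G into finitely many cells. Then at least one cell A_i is Δ-large; in particular, A_iA_i⁻¹ is large. -/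
open scoped Pointwise

lemma smul_inter_finite_iff {G : Type*} [Group G] (S : Set G) (g h : G) :
    ((g • S) ∩ (h • S)).Finite ↔ (((h⁻¹ * g) • S) ∩ S).Finite := by
  constructor
  · intro hf
    have := hf.smul_set (a := h⁻¹)
    rwa [Set.smul_set_inter, smul_smul, smul_smul, inv_mul_cancel, one_smul] at this
  · intro hf
    have := hf.smul_set (a := h)
    rwa [Set.smul_set_inter, smul_smul, mul_inv_cancel_left] at this

lemma key_lemma {G : Type*} [Group G] [Infinite G] :
    ∀ (n : ℕ) (A : Fin n → Set G) (F : Set G), F.Finite →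
      F * (⋃ i, A i) = Set.univ → ∃ i, IsLarge (Delta (A i)) := by
  intro n
  induction n with
  | zero =>
    intro A F hF hU
    rw [Set.iUnion_of_empty, Set.mul_empty] at hU
    exact absurd hU Set.empty_ne_univ
  | succ n ih =>
    intro A F hF hU
    set B := A 0 with hB
    set U : Set G := ⋃ i : Fin n, A i.succ with hUdef
    have hsplit : (⋃ i, A i) = B ∪ U := by
      ext y
      simp only [Set.mem_iUnion, Set.mem_union, hUdef]
      constructor
      · rintro ⟨i, hi⟩
        rcases Fin.eq_zero_or_eq_succ i with h0 | ⟨j, rfl⟩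
        · left; rwa [h0] at hi
        · right; exact ⟨j, hi⟩
      · rintro (h | ⟨j, hj⟩)
        · exact ⟨0, h⟩
        · exact ⟨j.succ, hj⟩
    rw [hsplit, Set.union_comm, Set.mul_union] at hU
    by_cases hcase : ∃ x : G, ∀ f ∈ F, ((x • B) ∩ (f • B)).Finite
    · obtain ⟨x, hx⟩ := hcase
      -- the part of x•B not covered by F*U is finite
      have hΦ' : ((x • B) \ (F * U)).Finite := by
        apply Set.Finite.subset (Set.Finite.biUnion hF (fun f hf => hx f hf))
        intro y hy
        have hyuniv : y ∈ F * U ∪ F * B := hU ▸ Set.mem_univ y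
        rcases hyuniv with h | h
        · exact absurd h hy.2
        · obtain ⟨f, hf, b, hb, rfl⟩ := h
          exact Set.mem_biUnion hf ⟨hy.1, ⟨b, hb, rfl⟩⟩
      set Φ : Set G := x⁻¹ • ((x • B) \ (F * U)) with hΦdef
      have hΦfin : Φ.Finite := hΦ'.smul_set
      have hBsub : B \ (x⁻¹ • (F * U)) ⊆ Φ := by
        intro b hb
        refine ⟨x * b, ⟨⟨b, hb.1, rfl⟩, ?_⟩, by simp⟩
        intro hmem
        exact hb.2 ⟨x * b, hmem, by simp⟩
      have hUne : U.Nonempty := by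
        rcases Set.eq_empty_or_nonempty U with h | h
        · exfalso
          have hBfin : B.Finite := by
            apply Set.Finite.subset hΦfin
            intro b hb
            apply hBsub
            refine ⟨hb, ?_⟩
            rw [h, Set.mul_empty, Set.smul_set_empty]
            exact Set.notMem_empty b
          have : (Set.univ : Set G).Finite := by
            rw [← hU, h, Set.mul_empty, Set.empty_union]
            exact hF.mul hBfin
          exact Set.infinite_univ this
        · exact h
      obtain ⟨u, hu⟩ := hUne
      set K : Set G := F ∪ F * {x⁻¹} * F ∪ F * Φ * {u⁻¹} with hKdef
      have hKfin : K.Finite :=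
        ((hF.union ((hF.mul (Set.finite_singleton _)).mul hF)).union
          ((hF.mul hΦfin).mul (Set.finite_singleton _)))
      have hKU : K * U = Set.univ := by
        apply Set.eq_univ_of_forall
        intro g
        have hg : g ∈ F * U ∪ F * B := hU ▸ Set.mem_univ g
        rcases hg with h | h
        · obtain ⟨f, hf, v, hv, rfl⟩ := h
          exact Set.mul_mem_mul (Or.inl (Or.inl hf)) hv
        · obtain ⟨f, hf, b, hb, hfb⟩ := h
          by_cases hbmem : b ∈ x⁻¹ • (F * U)
          · obtain ⟨c, hc, hcb⟩ := hbmem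
            obtain ⟨f', hf', v, hv, hfv⟩ := hc
            have heq : (f * x⁻¹ * f') * v = g := by
              rw [← hfb, ← hcb, ← hfv]; simp [smul_eq_mul, mul_assoc]
            exact heq ▸ Set.mul_mem_mul
              (Or.inl (Or.inr (Set.mul_mem_mul (Set.mul_mem_mul hf rfl) hf'))) hv
          · have hbΦ : b ∈ Φ := hBsub ⟨hb, hbmem⟩
            have heq : (f * b * u⁻¹) * u = g := by rw [← hfb]; group
            exact heq ▸ Set.mul_mem_mul
              (Or.inr (Set.mul_mem_mul (Set.mul_mem_mul hf hbΦ) rfl)) hu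
      obtain ⟨i, hi⟩ := ih (fun i => A i.succ) K hKfin hKU
      exact ⟨i.succ, hi⟩
    · push_neg at hcase
      refine ⟨0, F, hF, ?_⟩
      apply Set.eq_univ_of_forall
      intro g
      obtain ⟨f, hf, hinf⟩ := hcase g
      have hmem : f⁻¹ * g ∈ Delta B := by
        intro hfin
        exact hinf ((smul_inter_finite_iff B g f).mpr hfin)
      have : g = f * (f⁻¹ * g) := by group
      rw [this]
      exact Set.mul_mem_mul hf hmem

lemma delta_subset {G : Type*} [Group G] (A : Set G) : Delta A ⊆ A * A⁻¹ := by
  intro g hg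
  obtain ⟨y, hy1, hy2⟩ := (Set.Infinite.nonempty hg)
  obtain ⟨a, ha, rfl⟩ := hy1
  have : g • a * a⁻¹ = g := by simp [smul_eq_mul]
  exact ⟨g • a, hy2, a⁻¹, Set.inv_mem_inv.mpr ha, this⟩

theorem partition_has_delta_large_cell {G : Type*} [Group G] [Infinite G]
    (n : ℕ) (A : Fin n → Set G)
    (hcover : (⋃ i, A i) = Set.univ)
    (hdisj : ∀ i j : Fin n, i ≠ j → Disjoint (A i) (A j)) :
    ∃ i : Fin n, IsLarge (Delta (A i)) ∧ IsLarge (A i * (A i)⁻¹) := by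
  obtain ⟨i, hi⟩ := key_lemma n A 1 Set.finite_one (by rw [one_mul, hcover])
  refine ⟨i, hi, ?_⟩
  obtain ⟨F, hF, hFD⟩ := hi
  refine ⟨F, hF, ?_⟩
  apply Set.eq_univ_of_univ_subset
  calc Set.univ = F * Delta (A i) := hFD.symm
    _ ⊆ F * (A i * (A i)⁻¹) := Set.mul_subset_mul_left (delta_subset _)
end

section
/- Let G be an infinite group. Then every element of G has odd order if and only if for every partition G = A ∪ B of G into two cells, either Δ(A) = G or Δ(B) = G. -/
open scoped Pointwise

/-- Two sets are nearly equal if their symmetric difference is finite. -/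
def NearEq {G : Type*} (S T : Set G) : Prop := (S \ T).Finite ∧ (T \ S).Finite

lemma NearEq.symm' {G : Type*} {S T : Set G} (h : NearEq S T) : NearEq T S := ⟨h.2, h.1⟩

lemma NearEq.trans' {G : Type*} {S T U : Set G} (h1 : NearEq S T) (h2 : NearEq T U) :
    NearEq S U := by
  constructor
  · exact ((h1.1.union h2.1).subset (fun x hx => by
      by_cases hT : x ∈ T
      · exact Or.inr ⟨hT, hx.2⟩
      · exact Or.inl ⟨hx.1, hT⟩))
  · exact ((h2.2.union h1.2).subset (fun x hx => by
      by_cases hT : x ∈ T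
      · exact Or.inr ⟨hT, hx.2⟩
      · exact Or.inl ⟨hx.1, hT⟩))

lemma NearEq.smul' {G : Type*} [Group G] (a : G) {S T : Set G} (h : NearEq S T) :
    NearEq (a • S) (a • T) := by
  constructor
  · rw [← Set.smul_set_sdiff]; exact h.1.smul_set
  · rw [← Set.smul_set_sdiff]; exact h.2.smul_set

/-- If `k • S` is almost contained in `S`, so is `k ^ j • S` for any `j`. -/
lemma pow_smul_diff_finite {G : Type*} [Group G] {k : G} {S : Set G}
    (h : ((k • S) \ S).Finite) : ∀ j : ℕ, ((k ^ j • S) \ S).Finite := by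
  intro j
  induction j with
  | zero => simp
  | succ j ih =>
    have hsub : (k ^ (j+1) • S) \ S ⊆ (k • ((k ^ j • S) \ S)) ∪ ((k • S) \ S) := by
      intro x hx
      by_cases hks : x ∈ k • S
      · exact Or.inr ⟨hks, hx.2⟩
      · refine Or.inl ?_
        have hx1 : x ∈ k • (k ^ j • S) := by
          rw [smul_smul, ← pow_succ']; exact hx.1
        rw [Set.smul_set_sdiff]
        exact ⟨hx1, hks⟩
    exact ((ih.smul_set.union h).subset hsub)

/-- For an element of finite order, near-invariance in one direction implies the other. -/
lemma diff_smul_finite_of_finiteOrder {G : Type*} [Group G] {k : G} {S : Set G}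
    (hord : orderOf k ≠ 0) (h : ((k • S) \ S).Finite) : (S \ (k • S)).Finite := by
  have hkinv : k⁻¹ = k ^ (orderOf k - 1) := by
    have h1 : k ^ (orderOf k - 1) * k = 1 := by
      rw [← pow_succ, Nat.sub_add_cancel (Nat.one_le_iff_ne_zero.mpr hord)]
      exact pow_orderOf_eq_one k
    exact (eq_inv_of_mul_eq_one_left h1).symm
  have h2 : ((k⁻¹ • S) \ S).Finite := by
    rw [hkinv]; exact pow_smul_diff_finite h _
  have h3 : S \ (k • S) = k • ((k⁻¹ • S) \ S) := by
    rw [Set.smul_set_sdiff, smul_inv_smul]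
  rw [h3]
  exact h2.smul_set

theorem odd_order_iff_delta_partition {G : Type*} [Group G] [Infinite G] :
    (∀ g : G, Odd (orderOf g)) ↔
      ∀ A B : Set G, A ∪ B = Set.univ → Disjoint A B →
        Delta A = Set.univ ∨ Delta B = Set.univ := by
  constructor
  · -- forward direction
    intro hodd A B hunion hdisj
    have hB : B = Aᶜ := by
      apply Set.eq_of_subset_of_subset
      · intro x hx
        exact fun hxA => (Set.disjoint_left.mp hdisj hxA) hx
      · intro x hx
        have : x ∈ A ∪ B := hunion ▸ Set.mem_univ x
        exact this.resolve_left hx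
    subst hB
    by_contra hcon
    push_neg at hcon
    obtain ⟨hA, hAc⟩ := hcon
    obtain ⟨g, hg⟩ := (Set.ne_univ_iff_exists_notMem _).mp hA
    obtain ⟨t, ht⟩ := (Set.ne_univ_iff_exists_notMem _).mp hAc
    rw [Delta, Set.mem_setOf_eq, Set.not_infinite] at hg ht
    -- hg : (g • A ∩ A).Finite, ht : (t • Aᶜ ∩ Aᶜ).Finite
    set u := g * t with hu
    have huord : orderOf u ≠ 0 := (hodd u).pos.ne'
    -- (u • Aᶜ) \ Aᶜ is finite
    have hu1 : ((u • Aᶜ) \ Aᶜ).Finite := by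
      have hsub : (u • Aᶜ) \ Aᶜ ⊆ (g • ((t • Aᶜ) ∩ Aᶜ)) ∪ ((g • A) ∩ A) := by
        intro x hx
        have hx1 : x ∈ g • (t • Aᶜ) := by rw [smul_smul]; exact hx.1
        obtain ⟨y, hy, hyx⟩ := hx1
        by_cases hyA : y ∈ Aᶜ
        · exact Or.inl ⟨y, ⟨hy, hyA⟩, hyx⟩
        · refine Or.inr ⟨⟨y, not_not.mp hyA, hyx⟩, not_not.mp hx.2⟩
      exact (((ht.smul_set).union hg).subset hsub)
    have hu2 : (Aᶜ \ (u • Aᶜ)).Finite := diff_smul_finite_of_finiteOrder huord hu1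
    -- (g⁻¹ • Aᶜ) \ (t • Aᶜ) is finite
    have h3 : ((g⁻¹ • Aᶜ) \ (t • Aᶜ)).Finite := by
      have : (g⁻¹ • Aᶜ) \ (t • Aᶜ) = g⁻¹ • (Aᶜ \ (u • Aᶜ)) := by
        rw [Set.smul_set_sdiff, hu, ← smul_smul, inv_smul_smul]
      rw [this]; exact hu2.smul_set
    -- (g⁻¹ • Aᶜ ∩ Aᶜ) is finite
    have h4 : ((g⁻¹ • Aᶜ) ∩ Aᶜ).Finite := by
      have hsub : (g⁻¹ • Aᶜ) ∩ Aᶜ ⊆ ((g⁻¹ • Aᶜ) \ (t • Aᶜ)) ∪ ((t • Aᶜ) ∩ Aᶜ) := by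
        intro x hx
        by_cases hxt : x ∈ t • Aᶜ
        · exact Or.inr ⟨hxt, hx.2⟩
        · exact Or.inl ⟨hx.1, hxt⟩
      exact ((h3.union ht).subset hsub)
    have h5 : ((g • Aᶜ) ∩ Aᶜ).Finite := by
      have : (g • Aᶜ) ∩ Aᶜ = g • ((Aᶜ) ∩ (g⁻¹ • Aᶜ)) := by
        rw [Set.smul_set_inter, smul_inv_smul]
      rw [this]
      exact (h4.subset (fun x hx => ⟨hx.2, hx.1⟩)).smul_set
    -- g • A ≈ Aᶜ and g • Aᶜ ≈ A
    have h1 : NearEq (g • A) Aᶜ := by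
      constructor
      · have : (g • A) \ Aᶜ = (g • A) ∩ A := by
          ext x; simp [Set.mem_diff]
        rw [this]; exact hg
      · have : Aᶜ \ (g • A) = (g • Aᶜ) ∩ Aᶜ := by
          ext x
          simp only [Set.mem_diff, Set.mem_inter_iff, Set.mem_compl_iff,
            Set.mem_smul_set_iff_inv_smul_mem]
          tauto
        rw [this]; exact h5
    have h2 : NearEq (g • Aᶜ) A := by
      constructor
      · have : (g • Aᶜ) \ A = (g • Aᶜ) ∩ Aᶜ := rfl
        rw [this]; exact h5
      · have : A \ (g • Aᶜ) = (g • A) ∩ A := by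
          ext x
          simp only [Set.mem_diff, Set.mem_inter_iff, Set.mem_compl_iff,
            Set.mem_smul_set_iff_inv_smul_mem, not_not]
          tauto
        rw [this]; exact hg
    -- even powers of g nearly fix A
    have heven : ∀ j : ℕ, NearEq (g ^ (2 * j) • A) A := by
      intro j
      induction j with
      | zero =>
        simp only [Nat.mul_zero, pow_zero, one_smul]
        exact ⟨by simp, by simp⟩
      | succ j ih =>
        have hpow : g ^ (2 * (j + 1)) • A = g • g • (g ^ (2 * j) • A) := by
          rw [smul_smul, smul_smul]
          congr 1
          rw [show 2 * (j + 1) = 2 * j + 1 + 1 by ring, pow_succ', pow_succ',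
            ← mul_assoc]
        rw [hpow]
        have step1 : NearEq (g • g • (g ^ (2 * j) • A)) (g • g • A) :=
          (ih.smul' g).smul' g
        have step2 : NearEq (g • g • A) (g • Aᶜ) := h1.smul' g
        exact (step1.trans' step2).trans' h2
    -- conclude: A ≈ Aᶜ
    obtain ⟨m, hm⟩ := hodd g
    have hgn : g ^ orderOf g • A = A := by
      rw [pow_orderOf_eq_one, one_smul]
    have hfin : NearEq A Aᶜ := by
      have : g ^ orderOf g • A = g • (g ^ (2 * m) • A) := by
        rw [smul_smul, ← pow_succ', hm]
      rw [this] at hgn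
      have : NearEq (g • (g ^ (2 * m) • A)) Aᶜ :=
        (((heven m).smul' g).trans' h1)
      rw [hgn] at this
      exact this
    have hAfin : A.Finite := by
      have : A \ Aᶜ = A := by ext x; simp
      rw [← this]; exact hfin.1
    have hAcfin : (Aᶜ : Set G).Finite := by
      have : Aᶜ \ A = Aᶜ := by ext x; simp
      rw [← this]; exact hfin.2
    have : (Set.univ : Set G).Finite := by
      rw [← Set.union_compl_self A]; exact hAfin.union hAcfin
    exact Set.infinite_univ this
  · -- reverse direction
    intro hpart g
    by_contra hodd
    have heven : Even (orderOf g) := Nat.not_odd_iff_even.mp hodd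
    -- setoid: same orbit under powers of g
    let r : Setoid G := ⟨fun x y => ∃ k : ℤ, x = g ^ k * y, by
      constructor
      · intro x; exact ⟨0, by simp⟩
      · rintro x y ⟨k, hk⟩; exact ⟨-k, by rw [hk]; group⟩
      · rintro x y z ⟨k, hk⟩ ⟨j, hj⟩; exact ⟨k + j, by rw [hk, hj]; group⟩⟩
    let s : G → G := fun x => (Quotient.mk r x).out
    have hs_rel : ∀ x : G, ∃ k : ℤ, x = g ^ k * s x := by
      intro x
      obtain ⟨k, hk⟩ := (Quotient.mk_out (s := r) x : r.r _ x)
      refine ⟨-k, ?_⟩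
      show x = g ^ (-k) * (Quotient.mk r x).out
      rw [hk]; group
    have hs_eq : ∀ x y : G, (∃ k : ℤ, x = g ^ k * y) → s x = s y := by
      intro x y h
      have : Quotient.mk r x = Quotient.mk r y := Quotient.sound h
      simp only [s, this]
    set A : Set G := {x | ∃ k : ℤ, Even k ∧ x = g ^ k * s x} with hA
    -- key parity fact
    have hkey : ∀ (x : G) (k j : ℤ), x = g ^ k * s x → x = g ^ j * s x → Even k → Even j := by
      intro x k j hk hj hek
      have hgkj : g ^ (j - k) = 1 := by
        have : g ^ k * s x = g ^ j * s x := by rw [← hk, ← hj]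
        have h2 : g ^ k = g ^ j := mul_right_cancel this
        rw [zpow_sub, ← h2]
        group
      have hdvd : (orderOf g : ℤ) ∣ (j - k) := orderOf_dvd_iff_zpow_eq_one.mpr hgkj
      obtain ⟨c, hc⟩ := hdvd
      have : Even (j - k) := by
        obtain ⟨m, hm⟩ := heven
        refine ⟨m * c, ?_⟩
        rw [hc]
        push_cast [hm]
        ring
      have := this.add hek
      simpa using this
    -- g • A ∩ A = ∅
    have hgA : (g • A) ∩ A = ∅ := by
      ext x
      simp only [Set.mem_inter_iff, Set.mem_empty_iff_false, iff_false]
      rintro ⟨⟨y, ⟨k, hek, hky⟩, hyx⟩, ⟨j, hej, hjx⟩⟩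
      simp only [smul_eq_mul] at hyx
      have hsxy : s x = s y := hs_eq x y ⟨1, by rw [← hyx]; group⟩
      have hx1 : x = g ^ (k + 1) * s x := by
        rw [hsxy, ← hyx]
        nth_rewrite 1 [hky]
        group
      have : Even (k + 1) := hkey x j (k + 1) hjx hx1 hej
      rw [Int.even_add_one, Int.not_even_iff_odd] at this
      exact (Int.not_even_iff_odd.mpr this) hek
    -- g • Aᶜ ∩ Aᶜ = ∅
    have hgAc : (g • Aᶜ) ∩ Aᶜ = ∅ := by
      ext x
      simp only [Set.mem_inter_iff, Set.mem_empty_iff_false, iff_false]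
      rintro ⟨⟨y, hy, hyx⟩, hx⟩
      obtain ⟨k, hky⟩ := hs_rel y
      have hko : ¬ Even k := fun hek => hy ⟨k, hek, hky⟩
      simp only [smul_eq_mul] at hyx
      have hsxy : s x = s y := hs_eq x y ⟨1, by rw [← hyx]; group⟩
      have hx1 : x = g ^ (k + 1) * s x := by
        rw [hsxy, ← hyx]
        nth_rewrite 1 [hky]
        group
      exact hx ⟨k + 1, (Int.even_add_one).mpr hko, hx1⟩
    have := hpart A Aᶜ (Set.union_compl_self A) disjoint_compl_right
    rcases this with h | h
    · have : g ∈ Delta A := h ▸ Set.mem_univ g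
      rw [Delta, Set.mem_setOf_eq, hgA] at this
      exact this Set.finite_empty
    · have : g ∈ Delta Aᶜ := h ▸ Set.mem_univ g
      rw [Delta, Set.mem_setOf_eq, hgAc] at this
      exact this Set.finite_empty
end

section
/- Let G be an infinite group and let A ⊆ G be a subset such that A = A⁻¹ and e ∈ A. Then there exists a subset X ⊆ G such that Δ(X) = A. -/
open scoped Pointwise

namespace InvAux

noncomputable section

open Set Cardinal

universe u

/-- The index type: a well-order of order type `(#G).ord`, so that every
initial segment has cardinality `< #G`. -/
abbrev O (G : Type u) : Type u := (Cardinal.mk G).ord.ToType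

variable {G : Type u} [Group G] [Infinite G]

/-- The two elements of the pair attached to an index: `y` and `a * y`. -/
def el (a y : G) (j : Bool) : G := (cond j a 1) * y

/-- Generic "forbidden value" shape. -/
def badVal (t c w : G) (i s : Bool) : G := (cond i t⁻¹ 1) * ((cond s c c⁻¹) * w)

lemma badVal_eq (t c w y' : G) (i : Bool) (h : (cond i t 1) * y' = c * w) :
    y' = badVal t c w i true := by
  cases i
  · simp only [badVal, cond_false, cond_true, one_mul] at h ⊢
    exact h
  · simp only [badVal, cond_true] at h ⊢
    exact eq_inv_mul_iff_mul_eq.mpr h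

lemma badVal_eq' (t c w y' : G) (i : Bool) (h : (cond i t 1) * y' = c⁻¹ * w) :
    y' = badVal t c w i false := by
  cases i
  · simp only [badVal, cond_false, one_mul] at h ⊢
    exact h
  · simp only [badVal, cond_true, cond_false] at h ⊢
    exact eq_inv_mul_iff_mul_eq.mpr h

/-- The set of forbidden values at step `γ`, given previously chosen values `f`. -/
def Bad (aF : O G → G) (γ : O G) (f : ∀ β : O G, β < γ → G) : Set G :=
  Set.range fun q : ({β : O G // β < γ} × {β : O G // β < γ} × {β : O G // β < γ}) ×
      Bool × Bool × Bool × Bool × Bool =>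
    badVal (aF γ)
      (el (aF q.1.2.1.1) (f q.1.2.1.1 q.1.2.1.2) q.2.2.2.2.1 *
        (el (aF q.1.2.2.1) (f q.1.2.2.1 q.1.2.2.2) q.2.2.2.2.2)⁻¹)
      (el (aF q.1.1.1) (f q.1.1.1 q.1.1.2) q.2.2.2.1)
      q.2.1 q.2.2.1

lemma mk_Bad_lt (aF : O G → G) (γ : O G) (f : ∀ β : O G, β < γ → G) :
    Cardinal.mk (Bad aF γ f) < Cardinal.mk G := by
  have hℵ : ℵ₀ ≤ Cardinal.mk G := Cardinal.infinite_iff.mp inferInstance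
  have hseg : Cardinal.mk {β : O G // β < γ} < Cardinal.mk G :=
    Cardinal.mk_Iio_ord_toType γ
  refine lt_of_le_of_lt Cardinal.mk_range_le ?_
  have htrip : Cardinal.mk ({β : O G // β < γ} × {β : O G // β < γ} × {β : O G // β < γ})
      < Cardinal.mk G := by
    rw [Cardinal.mk_prod, Cardinal.mk_prod, Cardinal.lift_id, Cardinal.lift_id]
    exact Cardinal.mul_lt_of_lt hℵ hseg (Cardinal.mul_lt_of_lt hℵ hseg hseg)
  calc Cardinal.mk ((({β : O G // β < γ} × {β : O G // β < γ} × {β : O G // β < γ})) ×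
      (Bool × Bool × Bool × Bool × Bool))
      = Cardinal.lift.{0} (Cardinal.mk ({β : O G // β < γ} × {β : O G // β < γ} ×
          {β : O G // β < γ})) *
        Cardinal.lift.{u} (Cardinal.mk (Bool × Bool × Bool × Bool × Bool)) :=
        Cardinal.mk_prod _ _
    _ < Cardinal.mk G := by
        rw [Cardinal.lift_uzero]
        refine Cardinal.mul_lt_of_lt hℵ htrip ?_
        refine lt_of_lt_of_le ?_ hℵ
        rw [Cardinal.lift_lt_aleph0]
        exact Cardinal.lt_aleph0_of_finite _

lemma exists_avoid (aF : O G → G) (γ : O G) (f : ∀ β : O G, β < γ → G) :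
    ∃ z : G, z ∉ Bad aF γ f := by
  by_contra h
  push_neg at h
  have heq : Bad aF γ f = Set.univ := Set.eq_univ_of_forall h
  have h2 := mk_Bad_lt aF γ f
  rw [heq, Cardinal.mk_univ] at h2
  exact lt_irrefl _ h2

/-- The recursion step. -/
def step (aF : O G → G) (γ : O G) (ih : ∀ β : O G, β < γ → G) : G :=
  Classical.choose (exists_avoid aF γ ih)

/-- The recursively chosen points. -/
def y (aF : O G → G) : O G → G :=
  (wellFounded_lt (α := O G)).fix (step aF)

lemma y_spec (aF : O G → G) (γ : O G) :
    y aF γ ∉ Bad aF γ (fun β _ => y aF β) := by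
  have h : y aF γ = step aF γ (fun β _ => y aF β) :=
    (wellFounded_lt (α := O G)).fix_eq (step aF) γ
  rw [h]
  exact Classical.choose_spec (exists_avoid aF γ _)

lemma y_avoid (aF : O G → G) {γ β β' β'' : O G}
    (hβ : β < γ) (hβ' : β' < γ) (hβ'' : β'' < γ) (i s j j' j'' : Bool) :
    y aF γ ≠ badVal (aF γ)
      (el (aF β') (y aF β') j' * (el (aF β'') (y aF β'') j'')⁻¹)
      (el (aF β) (y aF β) j) i s :=
  fun h => y_spec aF γ ⟨⟨⟨⟨β, hβ⟩, ⟨β', hβ'⟩, ⟨β'', hβ''⟩⟩, i, s, j, j', j''⟩, h.symm⟩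

lemma el_ne (aF : O G → G) {γ β : O G} (h : β < γ) (i j : Bool) :
    el (aF γ) (y aF γ) i ≠ el (aF β) (y aF β) j := by
  intro he
  refine y_avoid aF h h h i true j true true ?_
  refine badVal_eq _ _ _ _ i ?_
  rw [mul_inv_cancel, one_mul]
  exact he

lemma el_ne' (aF : O G → G) {γ β : O G} (h : β ≠ γ) (i j : Bool) :
    el (aF γ) (y aF γ) i ≠ el (aF β) (y aF β) j := by
  rcases lt_or_gt_of_ne h with h1 | h1
  · exact el_ne aF h1 i j
  · exact fun he => el_ne aF h1 j i he.symm

lemma y_inj (aF : O G → G) : Function.Injective (y aF) := by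
  intro γ δ h
  by_contra hne
  exact el_ne' aF (Ne.symm hne) false false (by simpa [el] using h)

lemma max_le_aux (aF : O G → G) {γ β γ' β' : O G} (hne : β ≠ γ) {i j i' j' : Bool}
    (heq : el (aF γ) (y aF γ) i * (el (aF β) (y aF β) j)⁻¹ =
           el (aF γ') (y aF γ') i' * (el (aF β') (y aF β') j')⁻¹) :
    max γ β ≤ max γ' β' := by
  by_contra hlt
  push_neg at hlt
  have hγ' : γ' < max γ β := (le_max_left γ' β').trans_lt hlt
  have hβ'l : β' < max γ β := (le_max_right γ' β').trans_lt hlt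
  rcases lt_or_gt_of_ne hne with h2 | h2
  · -- β < γ : the max is γ
    have hm : max γ β = γ := max_eq_left h2.le
    rw [hm] at hγ' hβ'l
    refine y_avoid aF h2 hγ' hβ'l i true j i' j' ?_
    exact badVal_eq _ _ _ _ i (mul_inv_eq_iff_eq_mul.mp heq)
  · -- γ < β : the max is β
    have hm : max γ β = β := max_eq_right h2.le
    rw [hm] at hγ' hβ'l
    refine y_avoid aF h2 hγ' hβ'l j false i i' j' ?_
    refine badVal_eq' _ _ _ _ j ?_
    exact eq_inv_mul_iff_mul_eq.mpr (mul_inv_eq_iff_eq_mul.mp heq).symm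

lemma max_eq_max (aF : O G → G) {γ β γ' β' : O G} (hne : β ≠ γ) (hne' : β' ≠ γ')
    {i j i' j' : Bool}
    (heq : el (aF γ) (y aF γ) i * (el (aF β) (y aF β) j)⁻¹ =
           el (aF γ') (y aF γ') i' * (el (aF β') (y aF β') j')⁻¹) :
    max γ β = max γ' β' :=
  le_antisymm (max_le_aux aF hne heq) (max_le_aux aF hne' heq.symm)

/-- The constructed set. -/
def Xs (aF : O G → G) : Set G :=
  Set.range fun p : O G × Bool => el (aF p.1) (y aF p.1) p.2

lemma infinite_inter (aF : O G → G) {g : G}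
    (hfib : {γ : O G | aF γ = g}.Infinite) :
    ((g • Xs aF) ∩ Xs aF).Infinite := by
  have hsub : (fun γ => g * y aF γ) '' {γ : O G | aF γ = g} ⊆ (g • Xs aF) ∩ Xs aF := by
    rintro z ⟨γ, (hγ : aF γ = g), rfl⟩
    constructor
    · refine ⟨y aF γ, ⟨(γ, false), ?_⟩, by simp [smul_eq_mul]⟩
      simp [el]
    · exact ⟨(γ, true), by simp [el, hγ]⟩
  refine Set.Infinite.mono hsub ?_
  refine Set.Infinite.image ?_ hfib
  intro γ _ δ _ h
  exact y_inj aF (mul_left_cancel h)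

lemma mem_decomp (aF : O G → G) {A : Set G} (hrA : ∀ γ, aF γ ∈ A)
    (hsymm : A⁻¹ = A) (hone : (1 : G) ∈ A) {g : G} (hg : g ∉ A)
    {z : G} (hz : z ∈ (g • Xs aF) ∩ Xs aF) :
    ∃ (γ : O G) (i : Bool) (β : O G) (j : Bool),
      z = el (aF γ) (y aF γ) i ∧ g * el (aF β) (y aF β) j = z ∧ β ≠ γ := by
  obtain ⟨hz1, hz2⟩ := hz
  obtain ⟨⟨γ, i⟩, hzi⟩ := hz2
  obtain ⟨x, hx, hgx⟩ := Set.mem_smul_set.mp hz1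
  obtain ⟨⟨β, j⟩, hxj⟩ := hx
  have hzi' : el (aF γ) (y aF γ) i = z := hzi
  have hxj' : el (aF β) (y aF β) j = x := hxj
  have hgz : g * el (aF β) (y aF β) j = z := by rw [hxj']; exact hgx
  refine ⟨γ, i, β, j, hzi'.symm, hgz, ?_⟩
  rintro rfl
  apply hg
  have hgval : g = el (aF β) (y aF β) i * (el (aF β) (y aF β) j)⁻¹ :=
    eq_mul_inv_iff_mul_eq.mpr (hgz.trans hzi'.symm)
  have haA : aF β ∈ A := hrA β
  have hinvA : (aF β)⁻¹ ∈ A := by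
    rw [← hsymm]
    simpa using haA
  cases i <;> cases j <;> simp only [el, cond_true, cond_false, one_mul] at hgval
  · rw [hgval, mul_inv_cancel]; exact hone
  · rw [hgval]
    have h4 : y aF β * (aF β * y aF β)⁻¹ = (aF β)⁻¹ := by group
    rw [h4]; exact hinvA
  · rw [hgval, mul_inv_cancel_right]; exact haA
  · rw [hgval, mul_inv_cancel]; exact hone

lemma finite_inter (aF : O G → G) {A : Set G} (hrA : ∀ γ, aF γ ∈ A)
    (hsymm : A⁻¹ = A) (hone : (1 : G) ∈ A) {g : G} (hg : g ∉ A) :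
    ((g • Xs aF) ∩ Xs aF).Finite := by
  rcases Set.eq_empty_or_nonempty ((g • Xs aF) ∩ Xs aF) with hE | ⟨z₀, hz₀⟩
  · rw [hE]; exact Set.finite_empty
  obtain ⟨γ₀, i₀, β₀, j₀, hz₀e, hz₀g, hne₀⟩ := mem_decomp aF hrA hsymm hone hg hz₀
  set m := max γ₀ β₀ with hmdef
  refine Set.Finite.subset
    ((((Set.finite_singleton (g * el (aF m) (y aF m) true)).insert
        (g * el (aF m) (y aF m) false)).insert
        (el (aF m) (y aF m) true)).insert
        (el (aF m) (y aF m) false)) ?_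
  intro z hz
  obtain ⟨γ, i, β, j, hze, hzg, hne⟩ := mem_decomp aF hrA hsymm hone hg hz
  have e1 : g = el (aF γ) (y aF γ) i * (el (aF β) (y aF β) j)⁻¹ :=
    eq_mul_inv_iff_mul_eq.mpr (hzg.trans hze)
  have e0 : g = el (aF γ₀) (y aF γ₀) i₀ * (el (aF β₀) (y aF β₀) j₀)⁻¹ :=
    eq_mul_inv_iff_mul_eq.mpr (hz₀g.trans hz₀e)
  have heq : el (aF γ) (y aF γ) i * (el (aF β) (y aF β) j)⁻¹ =
      el (aF γ₀) (y aF γ₀) i₀ * (el (aF β₀) (y aF β₀) j₀)⁻¹ := by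
    rw [← e1, ← e0]
  have hm : max γ β = m := max_eq_max aF hne hne₀ heq
  simp only [Set.mem_insert_iff, Set.mem_singleton_iff]
  rcases max_choice γ β with hc | hc
  · have hγm : γ = m := by rw [← hm, hc]
    rw [hze, hγm]
    cases i
    · exact Or.inl rfl
    · exact Or.inr (Or.inl rfl)
  · have hβm : β = m := by rw [← hm, hc]
    rw [← hzg, hβm]
    cases j
    · exact Or.inr (Or.inr (Or.inl rfl))
    · exact Or.inr (Or.inr (Or.inr rfl))

end

end InvAux

theorem inverse_construction {G : Type*} [Group G] [Infinite G]
    (A : Set G) (hsymm : A⁻¹ = A) (hone : (1 : G) ∈ A) :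
    ∃ X : Set G, Delta X = A := by
  classical
  have hA : Nonempty ↥A := ⟨⟨1, hone⟩⟩
  have hℵ : Cardinal.aleph0 ≤ Cardinal.mk G := Cardinal.infinite_iff.mp inferInstance
  have hle : Cardinal.mk (↥A × ℕ) ≤ Cardinal.mk (InvAux.O G) := by
    rw [Cardinal.mk_ord_toType]
    have h1 : Cardinal.mk ↥A ≤ Cardinal.mk G := Cardinal.mk_set_le A
    calc Cardinal.mk (↥A × ℕ)
        = Cardinal.mk ↥A * Cardinal.aleph0 := by
          simp [Cardinal.mk_prod]
      _ ≤ Cardinal.mk G * Cardinal.mk G := mul_le_mul' h1 hℵ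
      _ = Cardinal.mk G := Cardinal.mul_eq_self hℵ
  obtain ⟨f⟩ := (Cardinal.le_def _ _).mp hle
  let aF : InvAux.O G → G := fun γ => ((Function.invFun f γ).1 : G)
  have hsurj : Function.Surjective (Function.invFun f) :=
    Function.invFun_surjective f.injective
  have hrA : ∀ γ, aF γ ∈ A := fun γ => ((Function.invFun f γ).1).2
  have hfib : ∀ g ∈ A, {γ : InvAux.O G | aF γ = g}.Infinite := by
    intro g hg
    have hφ : ∀ n : ℕ, ∃ γ : InvAux.O G, Function.invFun f γ = (⟨g, hg⟩, n) :=
      fun n => hsurj (⟨g, hg⟩, n)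
    choose φ hφs using hφ
    refine Set.infinite_of_injective_forall_mem (f := φ) ?_ ?_
    · intro n m h
      have h2 : ((⟨g, hg⟩ : ↥A), n) = ((⟨g, hg⟩ : ↥A), m) := by
        rw [← hφs n, ← hφs m, h]
      exact (Prod.ext_iff.mp h2).2
    · intro n
      show ((Function.invFun f (φ n)).1 : G) = g
      rw [hφs]
  refine ⟨InvAux.Xs aF, ?_⟩
  ext g
  simp only [Delta, Set.mem_setOf_eq]
  constructor
  · intro h
    by_contra hg
    exact (InvAux.finite_inter aF hrA hsymm hone hg).not_infinite h
  · intro hg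
    exact InvAux.infinite_inter aF (hfib g hg)
end

section
/- Let G be a countably infinite group and let A ⊆ G be a subset such that A = A⁻¹ and e ∈ A. Then there exists a subset X ⊆ G such that Δ(X) = A and X ∩ g₁X ∩ g₂X is finite for all distinct g₁, g₂ ∈ G \ {e}; in particular, X is 3-sparse. -/
open scoped Pointwise

namespace InvConAux

variable {G : Type*} [Group G]

/-- The `n`-th pair `{xₙ, σₙ xₙ}`. -/
def pairSet (σ x : ℕ → G) (n : ℕ) : Set G := {x n, σ n * x n}

lemma pairSet_finite (σ x : ℕ → G) (n : ℕ) : (pairSet σ x n).Finite :=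
  (Set.finite_singleton _).insert _

lemma self_mem_pairSet (σ x : ℕ → G) (n : ℕ) : x n ∈ pairSet σ x n := Or.inl rfl

lemma mul_mem_pairSet (σ x : ℕ → G) (n : ℕ) : σ n * x n ∈ pairSet σ x n := Or.inr rfl

/-- The set of cross quotients with indices below `n`. -/
def crossQ (σ x : ℕ → G) (n : ℕ) : Set G :=
  {g | ∃ i < n, ∃ j < n, i ≠ j ∧ ∃ u ∈ pairSet σ x i, ∃ v ∈ pairSet σ x j, g = u * v⁻¹}

lemma crossQ_finite (σ x : ℕ → G) (n : ℕ) : (crossQ σ x n).Finite := by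
  have h : crossQ σ x n ⊆ ⋃ i ∈ Finset.range n, ⋃ j ∈ Finset.range n,
      pairSet σ x i * (pairSet σ x j)⁻¹ := by
    rintro g ⟨i, hi, j, hj, -, u, hu, v, hv, rfl⟩
    exact Set.mem_biUnion (Finset.mem_coe.2 (Finset.mem_range.2 hi))
      (Set.mem_biUnion (Finset.mem_coe.2 (Finset.mem_range.2 hj))
        (Set.mul_mem_mul hu (Set.inv_mem_inv.2 hv)))
  exact (Set.Finite.biUnion (Finset.range n).finite_toSet fun i _ =>
    Set.Finite.biUnion (Finset.range n).finite_toSet fun j _ =>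
      ((pairSet_finite σ x i).mul ((pairSet_finite σ x j).inv))).subset h

/-- The goodness condition for the choice of `x n = g`. -/
def GoodAt (σ x : ℕ → G) (n : ℕ) (g : G) : Prop :=
  ∀ m < n, ∀ v ∈ pairSet σ x m, ∀ u ∈ ({g, σ n * g} : Set G),
    u * v⁻¹ ∉ crossQ σ x n ∧ u * v⁻¹ ≠ 1 ∧ v * u⁻¹ ∉ crossQ σ x n

lemma exists_goodAt [Infinite G] (σ x : ℕ → G) (n : ℕ) : ∃ g, GoodAt σ x n g := by
  classical
  set S : Set G := (crossQ σ x n ∪ {1}) ∪ (crossQ σ x n ∪ {1})⁻¹ with hS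
  have hSfin : S.Finite :=
    (((crossQ_finite σ x n).union (Set.finite_singleton 1))).union
      (((crossQ_finite σ x n).union (Set.finite_singleton 1)).inv)
  set Bad : Set G := ⋃ m ∈ Finset.range n, ⋃ v ∈ pairSet σ x m,
      (S * {v} ∪ (σ n)⁻¹ • (S * {v})) with hBadDef
  have hBadFin : Bad.Finite := by
    apply Set.Finite.biUnion (Finset.range n).finite_toSet
    intro m _
    apply Set.Finite.biUnion (pairSet_finite σ x m)
    intro v _
    exact (hSfin.mul (Set.finite_singleton v)).union
      ((hSfin.mul (Set.finite_singleton v)).smul_set)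
  obtain ⟨g, hg⟩ := hBadFin.infinite_compl.nonempty
  refine ⟨g, ?_⟩
  intro m hm v hv u hu
  -- If u*v⁻¹ ∈ S then g ∈ Bad, contradiction.
  have key : u * v⁻¹ ∉ S := by
    intro hmemS
    have huSv : u ∈ S * {v} := by
      have : (u * v⁻¹) * v ∈ S * {v} := Set.mul_mem_mul hmemS rfl
      simpa [inv_mul_cancel_right] using this
    apply hg
    have hin : u ∈ S * {v} ∪ (σ n)⁻¹ • (S * {v}) := Or.inl huSv
    rcases hu with rfl | rfl
    · exact Set.mem_biUnion (Finset.mem_coe.2 (Finset.mem_range.2 hm))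
        (Set.mem_biUnion hv hin)
    · have hg' : g ∈ (σ n)⁻¹ • (S * {v}) := by
        rw [Set.mem_smul_set_iff_inv_smul_mem]
        simpa [smul_eq_mul] using huSv
      exact Set.mem_biUnion (Finset.mem_coe.2 (Finset.mem_range.2 hm))
        (Set.mem_biUnion hv (Or.inr hg'))
  refine ⟨?_, ?_, ?_⟩
  · intro h; exact key (Or.inl (Or.inl h))
  · intro h; exact key (Or.inl (Or.inr h))
  · intro h
    apply key
    refine Or.inr ?_
    rw [Set.mem_inv]
    have hrw : (u * v⁻¹)⁻¹ = v * u⁻¹ := by group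
    rw [hrw]
    exact Or.inl h

lemma pairSet_congr {σ x x' : ℕ → G} {m : ℕ} (h : x m = x' m) :
    pairSet σ x m = pairSet σ x' m := by
  unfold pairSet; rw [h]

lemma crossQ_congr {σ x x' : ℕ → G} {n : ℕ} (h : ∀ m < n, x m = x' m) :
    crossQ σ x n = crossQ σ x' n := by
  have hp : ∀ m < n, pairSet σ x m = pairSet σ x' m := fun m hm => pairSet_congr (h m hm)
  ext g
  constructor <;> rintro ⟨i, hi, j, hj, hij, u, hu, v, hv, rfl⟩
  · exact ⟨i, hi, j, hj, hij, u, (hp i hi) ▸ hu, v, (hp j hj) ▸ hv, rfl⟩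
  · exact ⟨i, hi, j, hj, hij, u, (hp i hi).symm ▸ hu, v, (hp j hj).symm ▸ hv, rfl⟩

lemma goodAt_congr {σ x x' : ℕ → G} {n : ℕ} {g : G} (h : ∀ m < n, x m = x' m)
    (hx : GoodAt σ x n g) : GoodAt σ x' n g := by
  intro m hm v hv u hu
  have hv' : v ∈ pairSet σ x m := (pairSet_congr (h m hm)).symm ▸ hv
  have := hx m hm v hv' u hu
  rwa [crossQ_congr h] at this

noncomputable def pick [Infinite G] (σ x : ℕ → G) (n : ℕ) : G :=
  (exists_goodAt σ x n).choose

lemma pick_good [Infinite G] (σ x : ℕ → G) (n : ℕ) : GoodAt σ x n (pick σ x n) :=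
  (exists_goodAt σ x n).choose_spec

noncomputable def xseq [Infinite G] (σ : ℕ → G) : ℕ → G := fun n =>
  pick σ (fun m => if h : m < n then xseq σ m else 1) n
termination_by n => n
decreasing_by exact h

lemma xseq_good [Infinite G] (σ : ℕ → G) (n : ℕ) : GoodAt σ (xseq σ) n (xseq σ n) := by
  have h : xseq σ n = pick σ (fun m => if h : m < n then xseq σ m else 1) n := by
    rw [xseq]
  rw [h]
  exact goodAt_congr (fun m hm => by simp [hm]) (pick_good σ _ n)

section Main

variable {σ x : ℕ → G} (hgood : ∀ n, GoodAt σ x n (x n))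

include hgood

lemma L1 {m n : ℕ} (hmn : m < n) {u v : G} (hu : u ∈ pairSet σ x n) (hv : v ∈ pairSet σ x m) :
    u * v⁻¹ ∉ crossQ σ x n ∧ u * v⁻¹ ≠ 1 ∧ v * u⁻¹ ∉ crossQ σ x n :=
  hgood n m hmn v hv u hu

lemma pair_disjoint {m n : ℕ} (hmn : m ≠ n) {u : G} (hum : u ∈ pairSet σ x m)
    (hun : u ∈ pairSet σ x n) : False := by
  rcases hmn.lt_or_gt with h | h
  · exact (L1 hgood h hun hum).2.1 (by simp)
  · exact (L1 hgood h hum hun).2.1 (by simp)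

end Main

/-- The set of cross pairs producing the quotient `g`. -/
def crossPairs (σ x : ℕ → G) (g : G) : Set (ℕ × ℕ) :=
  {p | p.1 ≠ p.2 ∧ ∃ u ∈ pairSet σ x p.1, ∃ v ∈ pairSet σ x p.2, g = u * v⁻¹}

section Main2

variable {σ x : ℕ → G} (hgood : ∀ n, GoodAt σ x n (x n))

include hgood

lemma crossPairs_finite (g : G) : (crossPairs σ x g).Finite := by
  rcases Set.eq_empty_or_nonempty (crossPairs σ x g) with h | ⟨⟨i₀, j₀⟩, hij₀⟩
  · simp [h]
  · apply Set.Finite.subset ((Set.finite_Iic (max i₀ j₀)).prod (Set.finite_Iic (max i₀ j₀)))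
    rintro ⟨i, j⟩ ⟨hij, u, hu, v, hv, rfl⟩
    by_contra hcon
    simp only [Set.mem_prod, Set.mem_Iic, not_and_or, not_le] at hcon
    have hN : max i₀ j₀ < max i j := by
      rcases hcon with h | h
      · exact lt_of_lt_of_le h (le_max_left i j)
      · exact lt_of_lt_of_le h (le_max_right i j)
    obtain ⟨hne₀, u₀, hu₀, v₀, hv₀, hEq₀⟩ := hij₀
    have hgQ : u * v⁻¹ ∈ crossQ σ x (max i j) :=
      ⟨i₀, lt_of_le_of_lt (le_max_left i₀ j₀) hN, j₀,
        lt_of_le_of_lt (le_max_right i₀ j₀) hN, hne₀, u₀, hu₀, v₀, hv₀, hEq₀⟩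
    rcases le_or_gt j i with hle | hlt
    · have hji : j < i := lt_of_le_of_ne hle (Ne.symm hij)
      have hmax : max i j = i := max_eq_left (le_of_lt hji)
      rw [hmax] at hgQ
      exact (L1 hgood hji hu hv).1 hgQ
    · have hmax : max i j = j := max_eq_right (le_of_lt hlt)
      rw [hmax] at hgQ
      exact (L1 hgood hlt hv hu).2.2 hgQ

/-- Elements `y` with `y` and `g⁻¹ y` in different pairs: a finite set. -/
lemma crossElems_finite (g : G) :
    ({y | ∃ i j, i ≠ j ∧ y ∈ pairSet σ x i ∧ g⁻¹ * y ∈ pairSet σ x j} : Set G).Finite := by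
  apply Set.Finite.subset
    (Set.Finite.biUnion (crossPairs_finite hgood g) (fun p _ => pairSet_finite σ x p.1))
  rintro y ⟨i, j, hij, hyi, hyj⟩
  exact Set.mem_biUnion
    (show (i, j) ∈ crossPairs σ x g from ⟨hij, y, hyi, g⁻¹ * y, hyj, by group⟩) hyi

end Main2

end InvConAux

open InvConAux

private lemma two_elt_pigeonhole {G : Type*} {a b p q r : G}
    (hp : p = a ∨ p = b) (hq : q = a ∨ q = b) (hr : r = a ∨ r = b) :
    p = q ∨ p = r ∨ q = r := by
  rcases hq with hq | hq <;> rcases hr with hr | hr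
  · exact Or.inr (Or.inr (hq.trans hr.symm))
  · rcases hp with hp | hp
    · exact Or.inl (hp.trans hq.symm)
    · exact Or.inr (Or.inl (hp.trans hr.symm))
  · rcases hp with hp | hp
    · exact Or.inr (Or.inl (hp.trans hr.symm))
    · exact Or.inl (hp.trans hq.symm)
  · exact Or.inr (Or.inr (hq.trans hr.symm))

theorem inverse_construction_sparse {G : Type*} [Group G] [Countable G] [Infinite G]
    (A : Set G) (hsymm : A⁻¹ = A) (hone : (1 : G) ∈ A) :
    ∃ X : Set G, Delta X = A ∧
      (∀ g₁ g₂ : G, g₁ ≠ 1 → g₂ ≠ 1 → g₁ ≠ g₂ → (X ∩ (g₁ • X) ∩ (g₂ • X)).Finite) ∧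
      IsSparse 3 X := by
  classical
  -- a sequence σ enumerating A with each value attained infinitely often
  obtain ⟨f, hf⟩ := (Set.to_countable A).exists_eq_range ⟨1, hone⟩
  set σ : ℕ → G := fun n => f (Nat.unpair n).1 with hσdef
  have hσA : ∀ n, σ n ∈ A := fun n => hf ▸ Set.mem_range_self _
  have hσinf : ∀ a ∈ A, {n | σ n = a}.Infinite := by
    intro a ha
    rw [hf] at ha
    obtain ⟨k, rfl⟩ := ha
    apply Set.infinite_of_injective_forall_mem (f := fun m => Nat.pair k m)
    · intro m m' h
      have := congrArg (fun t => (Nat.unpair t).2) h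
      simpa [Nat.unpair_pair] using this
    · intro m
      simp [hσdef, Nat.unpair_pair]
  set x : ℕ → G := xseq σ with hxdef
  have hgood : ∀ n, GoodAt σ x n (x n) := fun n => xseq_good σ n
  set X : Set G := ⋃ n, pairSet σ x n with hXdef
  have memX : ∀ y : G, y ∈ X ↔ ∃ n, y ∈ pairSet σ x n := fun y => Set.mem_iUnion
  have memsmul : ∀ (g y : G), y ∈ g • X ↔ g⁻¹ * y ∈ X := by
    intro g y
    rw [Set.mem_smul_set_iff_inv_smul_mem, smul_eq_mul]
  have hxinj : Function.Injective x := by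
    intro m n h
    by_contra hmn
    exact pair_disjoint hgood hmn (self_mem_pairSet σ x m) (h ▸ self_mem_pairSet σ x n)
  -- the triple intersection property
  have htriple : ∀ g₁ g₂ : G, g₁ ≠ 1 → g₂ ≠ 1 → g₁ ≠ g₂ →
      (X ∩ (g₁ • X) ∩ (g₂ • X)).Finite := by
    intro g₁ g₂ h₁ h₂ h₁₂
    apply Set.Finite.subset ((crossElems_finite hgood g₁).union (crossElems_finite hgood g₂))
    rintro y ⟨⟨hyX, hy1⟩, hy2⟩
    rw [memsmul] at hy1 hy2
    obtain ⟨k, hk⟩ := (memX y).1 hyX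
    obtain ⟨m, hm⟩ := (memX _).1 hy1
    obtain ⟨n, hn⟩ := (memX _).1 hy2
    by_cases hkm : k = m
    · by_cases hkn : k = n
      · exfalso
        subst hkm; subst hkn
        have hd1 : y ≠ g₁⁻¹ * y := by
          intro h
          apply h₁
          have h2 : g₁ * y = 1 * y := by
            conv_lhs => rw [h]
            group
          exact mul_right_cancel h2
        have hd2 : y ≠ g₂⁻¹ * y := by
          intro h
          apply h₂
          have h2 : g₂ * y = 1 * y := by
            conv_lhs => rw [h]
            group
          exact mul_right_cancel h2
        have hd3 : g₁⁻¹ * y ≠ g₂⁻¹ * y := by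
          intro h
          exact h₁₂ (inv_injective (mul_right_cancel h))
        rcases two_elt_pigeonhole hk hm hn with h | h | h
        · exact hd1 h
        · exact hd2 h
        · exact hd3 h
      · exact Or.inr ⟨k, n, hkn, hk, hn⟩
    · exact Or.inl ⟨k, m, hkm, hk, hm⟩
  refine ⟨X, ?_, htriple, ?_⟩
  · -- Delta X = A
    apply Set.Subset.antisymm
    · -- Delta X ⊆ A
      intro g hg
      have hg' : ((g • X) ∩ X).Infinite := hg
      have hne : (((g • X) ∩ X) \
          {y | ∃ i j, i ≠ j ∧ y ∈ pairSet σ x i ∧ g⁻¹ * y ∈ pairSet σ x j}).Nonempty :=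
        (hg'.diff (crossElems_finite hgood g)).nonempty
      obtain ⟨y, ⟨hy1, hy2⟩, hy3⟩ := hne
      rw [memsmul] at hy1
      obtain ⟨i, hi⟩ := (memX y).1 hy2
      obtain ⟨j, hj⟩ := (memX _).1 hy1
      have hij : i = j := by
        by_contra h
        exact hy3 ⟨i, j, h, hi, hj⟩
      subst hij
      have hgy : g = y * (g⁻¹ * y)⁻¹ := by group
      rcases hi with hi | hi <;> rcases hj with hj | hj
      · -- g = 1
        have : g = 1 := by rw [hgy, hj, hi]; simp
        rw [this]; exact hone
      · -- g = σ i ⁻¹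
        have : g = (σ i)⁻¹ := by rw [hgy, hj, hi]; group
        rw [this, ← hsymm]
        exact Set.inv_mem_inv.2 (hσA i)
      · -- g = σ i
        have : g = σ i := by rw [hgy, hj, hi]; group
        rw [this]; exact hσA i
      · have : g = 1 := by rw [hgy, hj, hi]; group
        rw [this]; exact hone
    · -- A ⊆ Delta X
      intro a ha
      have hNinf := hσinf a ha
      have himg : (fun n => a * x n) '' {n | σ n = a} ⊆ (a • X) ∩ X := by
        rintro y ⟨n, hn, rfl⟩
        constructor
        · rw [memsmul]
          simp only [inv_mul_cancel_left]
          exact (memX _).2 ⟨n, self_mem_pairSet σ x n⟩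
        · apply (memX _).2
          exact ⟨n, by rw [← hn]; exact mul_mem_pairSet σ x n⟩
      have hinj : Set.InjOn (fun n => a * x n) {n | σ n = a} :=
        fun m _ n _ h => hxinj (mul_left_cancel h)
      exact Set.Infinite.mono himg (hNinf.image hinj)
  · -- IsSparse 3 X
    intro X' hX'
    obtain ⟨g₀, hg₀⟩ := hX'.nonempty
    obtain ⟨g₁, hg₁⟩ := (hX'.diff (Set.finite_singleton g₀)).nonempty
    obtain ⟨g₂, hg₂⟩ := (hX'.diff ((Set.finite_singleton g₁).insert g₀)).nonempty
    obtain ⟨hg₁X, hg₁ne⟩ := hg₁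
    obtain ⟨hg₂X, hg₂ne⟩ := hg₂
    simp only [Set.mem_singleton_iff] at hg₁ne
    simp only [Set.mem_insert_iff, Set.mem_singleton_iff, not_or] at hg₂ne
    refine ⟨{g₀, g₁, g₂}, ?_, ?_, ?_, ?_⟩
    · intro g hgmem
      rcases hgmem with rfl | rfl | rfl
      · exact hg₀
      · exact hg₁X
      · exact hg₂X
    · exact (Set.finite_singleton g₂).insert g₁ |>.insert g₀
    · have h1 := Set.ncard_insert_le g₀ ({g₁, g₂} : Set G)
      have h2 := Set.ncard_insert_le g₁ ({g₂} : Set G)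
      have h3 : ({g₂} : Set G).ncard = 1 := Set.ncard_singleton g₂
      omega
    · have hne1 : g₀⁻¹ * g₁ ≠ 1 := fun h => hg₁ne (inv_mul_eq_one.1 h).symm
      have hne2 : g₀⁻¹ * g₂ ≠ 1 := fun h => hg₂ne.1 (inv_mul_eq_one.1 h).symm
      have hne12 : g₀⁻¹ * g₁ ≠ g₀⁻¹ * g₂ := by
        intro h
        exact hg₂ne.2 (mul_left_cancel h).symm
      have hfin := htriple (g₀⁻¹ * g₁) (g₀⁻¹ * g₂) hne1 hne2 hne12
      have heq : (⋂ g ∈ ({g₀, g₁, g₂} : Set G), g • X) =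
          g₀ • (X ∩ (g₀⁻¹ * g₁) • X ∩ (g₀⁻¹ * g₂) • X) := by
        rw [Set.smul_set_inter, Set.smul_set_inter, smul_smul, smul_smul,
          mul_inv_cancel_left, mul_inv_cancel_left, Set.biInter_insert,
          Set.biInter_insert, Set.biInter_singleton, ← Set.inter_assoc]
      rw [heq]
      exact hfin.smul_set
end

section
/- Let G be a countably infinite group and let (g_n)_{n∈ω} be an injective sequence in G. Then there exists a subset X ⊆ FP((g_n)) such that Δ(X) = {e} ∪ FP((g_n)) ∪ (FP((g_n)))⁻¹. -/
open scoped Pointwise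

/-- The set `FP((g_n))` of all finite products `g_{i₁} g_{i₂} ⋯ g_{i_k}` with
`i₁ < i₂ < … < i_k`, `k ≥ 1`. -/
def FP {G : Type*} [Group G] (g : ℕ → G) : Set G :=
  {x : G | ∃ l : List ℕ, l ≠ [] ∧ l.Chain' (· < ·) ∧ (l.map g).prod = x}

/-!
Enumerate `FP((g_n)) = {b_0, b_1, …}` and let step `n` offer `b_{k(n)}`, where every `k` is
offered at infinitely many steps. At step `n` pick a fresh generator `c_n = g_v` with `v` so
large that `b_{k(n)} c_n ∈ FP((g_n))`, and put the block `{c_n, b_{k(n)} c_n}` into `X`.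
Then `b_k X ∩ X` contains `b_k c_n` for infinitely many `n`, so `FP((g_n)) ⊆ Δ(X)`, and `Δ(X)`
is closed under inverses. Conversely, fix an injection `ι : G → ℕ` and choose `c_n` so generic
that every quotient `y x⁻¹` of elements from two different blocks `m < n` has `n < ι (y x⁻¹)`.
A quotient inside one block lies in `{1, b, b⁻¹}`; any other `q` can only be `y x⁻¹` for
`x, y` in the finitely many blocks below `ι q`, so `qX ∩ X` is finite.
-/

open Filter Function

theorem exists_seq_forall_lt {α : Type*} [Nonempty α] {P : ℕ → α → Prop}
    {R : ℕ → α → ℕ → α → Prop} (h : ∀ n (x : ℕ → α), ∃ a, P n a ∧ ∀ m < n, R m (x m) n a) :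
    ∃ x : ℕ → α, ∀ n, P n (x n) ∧ ∀ m < n, R m (x m) n (x n) := by
  choose F hF using h
  let A : ℕ → ℕ → α := fun n =>
    Nat.rec (fun _ => Classical.arbitrary α) (fun n An => update An n (F n An)) n
  have hA : ∀ n, A (n + 1) = update (A n) n (F n (A n)) := fun _ => rfl
  have agree : ∀ n, ∀ m < n, A n m = A (m + 1) m := by
    intro n
    induction n with
    | zero => intro m hm; omega
    | succ n ih =>
      intro m hm
      rcases (Nat.lt_succ_iff.mp hm).eq_or_lt with rfl | hlt
      · rfl
      · rw [hA, update_of_ne hlt.ne, ih m hlt]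
  refine ⟨fun n => A (n + 1) n, fun n => ?_⟩
  obtain ⟨hP, hR⟩ := hF n (A n)
  show P n (A (n + 1) n) ∧ ∀ m < n, R m (A (m + 1) m) n (A (n + 1) n)
  rw [hA, update_self]
  exact ⟨hP, fun m hm => agree n m hm ▸ hR m hm⟩

section Group

variable {G : Type*} [Group G]

lemma inv_mem_Delta {A : Set G} {q : G} (h : q ∈ Delta A) : q⁻¹ ∈ Delta A := by
  have := h.smul_set (a := q⁻¹)
  rwa [Set.smul_set_inter, inv_smul_smul, Set.inter_comm] at this

lemma single_mem_FP (g : ℕ → G) (v : ℕ) : g v ∈ FP g :=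
  ⟨[v], by simp, List.isChain_singleton v, by simp⟩

lemma eventually_mul_mem_FP {g : ℕ → G} {x : G} (hx : x ∈ FP g) :
    ∀ᶠ v in atTop, x * g v ∈ FP g := by
  obtain ⟨l, -, hl, rfl⟩ := hx
  filter_upwards [(eventually_all_finite l.finite_toSet).2 fun i _ => eventually_gt_atTop i]
    with v hv
  refine ⟨l ++ [v], by simp, ?_, by simp⟩
  rw [List.Chain', List.isChain_append]
  exact ⟨hl, List.isChain_singleton v, fun a ha y hy => by
    simp only [List.head?_cons, Option.mem_def, Option.some.injEq] at hy
    exact hy ▸ hv a (List.mem_of_mem_getLast? ha)⟩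

def blockUnion (U : ℕ → Set G) (c : ℕ → G) : Set G :=
  ⋃ n, (· * c n) '' U n

def SeparatedBlocks (ι : G → ℕ) (U : ℕ → Set G) (c : ℕ → G) : Prop :=
  ∀ m n, m < n → ∀ u ∈ U n, ∀ u' ∈ U m,
    n < ι (u * c n * (u' * c m)⁻¹) ∧ n < ι (u' * c m * (u * c n)⁻¹)

variable {ι : G → ℕ} {U : ℕ → Set G} {c : ℕ → G}

lemma SeparatedBlocks.max_lt_of_ne (h : SeparatedBlocks ι U c) {m n : ℕ} (hmn : m ≠ n)
    {u u' : G} (hu : u ∈ U n) (hu' : u' ∈ U m) : max m n < ι (u' * c m * (u * c n)⁻¹) := by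
  rcases hmn.lt_or_gt with hlt | hlt
  · have := (h m n hlt u hu u' hu').2
    exact max_lt (hlt.trans this) this
  · have := (h n m hlt u' hu' u hu).1
    exact max_lt this (hlt.trans this)

lemma Delta_blockUnion_subset {T : Set G} (hfin : ∀ n, (U n).Finite)
    (hT : ∀ n, ∀ u ∈ U n, ∀ u' ∈ U n, u' * u⁻¹ ∈ T) (hsep : SeparatedBlocks ι U c) :
    Delta (blockUnion U c) ⊆ T := by
  intro q hq
  by_contra hqT
  refine hq (((Set.finite_Iio (ι q)).biUnion fun n _ => (hfin n).image (· * c n)).subset ?_)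
  rintro _ ⟨⟨x, hx, rfl⟩, hy⟩
  obtain ⟨n, u, hu, rfl⟩ := Set.mem_iUnion.1 hx
  obtain ⟨m, u', hu', hy⟩ := Set.mem_iUnion.1 hy
  have hq : q = u' * c m * (u * c n)⁻¹ := by
    beta_reduce at hy
    rw [hy, smul_eq_mul, mul_inv_cancel_right]
  have hmn : m ≠ n := by
    rintro rfl
    exact hqT (by simpa [hq] using hT m u hu u' hu')
  have hlevel := hq ▸ hsep.max_lt_of_ne hmn hu hu'
  exact Set.mem_biUnion (lt_of_le_of_lt (le_max_left m n) hlevel) ⟨u', hu', hy⟩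

lemma mem_Delta_blockUnion (hc : Injective c) (hU : ∀ n, 1 ∈ U n) {s : G}
    (hs : {n | s ∈ U n}.Infinite) : s ∈ Delta (blockUnion U c) := by
  refine (hs.image ((mul_right_injective s).comp hc).injOn).mono ?_
  rintro _ ⟨n, hn, rfl⟩
  exact ⟨⟨c n, Set.mem_iUnion.2 ⟨n, 1, hU n, one_mul _⟩, rfl⟩,
    Set.mem_iUnion.2 ⟨n, s, hn, rfl⟩⟩

lemma exists_strictMono_separatedBlocks {g : ℕ → G} (hg : Injective g) (hι : Injective ι)
    (hU : ∀ n, (U n).Finite) {P : ℕ → ℕ → Prop} (hP : ∀ n, ∀ᶠ v in atTop, P n v) :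
    ∃ j : ℕ → ℕ, StrictMono j ∧ (∀ n, P n (j n)) ∧ SeparatedBlocks ι U (g ∘ j) := by
  have eventually_lt : ∀ {φ : ℕ → G}, Injective φ → ∀ n, ∀ᶠ v in atTop, n < ι (φ v) :=
    fun hφ n => (hι.comp hφ).nat_tendsto_atTop.eventually_gt_atTop n
  obtain ⟨j, hj⟩ := exists_seq_forall_lt (P := P)
    (R := fun m a n v => a < v ∧ ∀ u ∈ U n, ∀ u' ∈ U m,
      n < ι (u * g v * (u' * g a)⁻¹) ∧ n < ι (u' * g a * (u * g v)⁻¹)) fun n x => by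
    refine ((hP n).and ((eventually_all_finite (Set.finite_Iio n)).2 fun m _ => ?_)).exists
    refine (eventually_gt_atTop (x m)).and ((eventually_all_finite (hU n)).2 fun u _ =>
      (eventually_all_finite (hU m)).2 fun u' _ => ?_)
    exact (eventually_lt ((mul_left_injective _).comp ((mul_right_injective u).comp hg)) n).and
      (eventually_lt ((mul_right_injective _).comp
        (inv_injective.comp ((mul_right_injective u).comp hg))) n)
  exact ⟨j, fun m n h => ((hj n).2 m h).1, fun n => (hj n).1, fun m n h => ((hj n).2 m h).2⟩

end Group

theorem delta_of_subset_of_FP_general {G : Type*} [Group G] [Countable G]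
    (g : ℕ → G) (hg : Function.Injective g) :
    ∃ X : Set G, X ⊆ FP g ∧ Delta X = {1} ∪ FP g ∪ (FP g)⁻¹ := by
  obtain ⟨b, hb⟩ := (FP g).to_countable.exists_eq_range ⟨g 0, single_mem_FP g 0⟩
  have hbFP : ∀ k, b k ∈ FP g := fun k => hb ▸ Set.mem_range_self k
  obtain ⟨ι, hι⟩ := Countable.exists_injective_nat G
  set U : ℕ → Set G := fun n => {1, b n.unpair.1}
  have hUfin : ∀ n, (U n).Finite := fun n => Set.toFinite _
  obtain ⟨j, hj, hjFP, hsep⟩ :=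
    exists_strictMono_separatedBlocks hg hι hUfin fun n => eventually_mul_mem_FP (hbFP n.unpair.1)
  have hoffer : ∀ k, b k ∈ Delta (blockUnion U (g ∘ j)) := fun k =>
    mem_Delta_blockUnion (hg.comp hj.injective) (fun n => Set.mem_insert _ _)
      ((Set.infinite_range_of_injective (f := Nat.pair k)
        fun _ _ h => (Nat.pair_eq_pair.1 h).2).mono (by rintro _ ⟨t, rfl⟩; simp))
  refine ⟨blockUnion U (g ∘ j), ?_, subset_antisymm ?_ ?_⟩
  · rintro _ ⟨_, ⟨n, rfl⟩, u, hu, rfl⟩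
    rcases hu with rfl | rfl
    · simpa using single_mem_FP g (j n)
    · exact hjFP n
  · refine Delta_blockUnion_subset hUfin (fun n u hu u' hu' => ?_) hsep
    rcases hu with rfl | rfl <;> rcases hu' with rfl | rfl <;> simp [hbFP]
  · rintro q ((hq | hq) | hq)
    · exact hq ▸ mem_Delta_blockUnion (hg.comp hj.injective) (fun n => Set.mem_insert _ _)
        (by simpa using Set.infinite_univ)
    · obtain ⟨k, rfl⟩ := hb ▸ hq
      exact hoffer k
    · obtain ⟨k, hk⟩ := hb ▸ hq
      simpa [hk] using inv_mem_Delta (hoffer k)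

theorem delta_of_subset_of_FP {G : Type*} [Group G] [Countable G] [Infinite G]
    (g : ℕ → G) (hg : Function.Injective g) :
    ∃ X : Set G, X ⊆ FP g ∧ Delta X = {1} ∪ FP g ∪ (FP g)⁻¹ :=
  delta_of_subset_of_FP_general g hg
end
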